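/- arXiv:2301.05799 — 13 statements merged into one kernel-verified Lean document; each statement's English description precedes it below -/
import Mathlib

section
/- Let A be a symmetric positive semidefinite d×d real matrix, q* ∈ ℝᵈ, and let q : (0,∞) → ℝᵈ be twice differentiable satisfying q̈(t) + (2/t) q̇(t) + A(q(t) − q*) = 0 for all t > 0. Then the function V(t) := t²⟨q(t) − q*, A(q(t) − q*)⟩ + ‖t q̇(t) + (q(t) − q*)‖² is constant in t on (0,∞). -/
open scoped RealInnerProductSpace

/-- For a twice differentiable solution `q` of
`q̈ + (2/t) q̇ + A(q - q*) = 0` on `(0,∞)` with `A` symmetric PSD, the function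
`V t = t²⟨q t - q*, A (q t - q*)⟩ + ‖t q̇ t + (q t - q*)‖²` is constant on `(0,∞)`. -/
theorem stmt_2 {d : ℕ} (A : Matrix (Fin d) (Fin d) ℝ) (hA : A.PosSemidef)
    (qs : EuclideanSpace ℝ (Fin d))
    (q q' q'' : ℝ → EuclideanSpace ℝ (Fin d))
    (hq : ∀ t : ℝ, 0 < t → HasDerivAt q (q' t) t)
    (hq' : ∀ t : ℝ, 0 < t → HasDerivAt q' (q'' t) t)
    (hode : ∀ t : ℝ, 0 < t →
      q'' t + (2 / t) • q' t + Matrix.toEuclideanLin A (q t - qs) = 0)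
    (V : ℝ → ℝ)
    (hV : ∀ t : ℝ, V t =
      t ^ 2 * ⟪q t - qs, Matrix.toEuclideanLin A (q t - qs)⟫
        + ‖t • q' t + (q t - qs)‖ ^ 2) :
    ∀ s t : ℝ, 0 < s → 0 < t → V s = V t := by
  set L : EuclideanSpace ℝ (Fin d) →L[ℝ] EuclideanSpace ℝ (Fin d) :=
    LinearMap.toContinuousLinearMap (Matrix.toEuclideanLin A) with hLdef
  have hLapp : ∀ y, L y = Matrix.toEuclideanLin A y := fun y => rfl
  have hsym : ∀ u v, ⟪Matrix.toEuclideanLin A u, v⟫ = ⟪u, Matrix.toEuclideanLin A v⟫ :=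
    Matrix.isHermitian_iff_isSymmetric.mp hA.1
  have hd : ∀ x : ℝ, 0 < x → HasDerivAt V 0 x := by
    intro x hx
    have hxne : x ≠ 0 := ne_of_gt hx
    have hp : HasDerivAt (fun t => q t - qs) (q' x) x := (hq x hx).sub_const qs
    have hLp : HasDerivAt (fun t => L (q t - qs)) (L (q' x)) x :=
      L.hasFDerivAt.comp_hasDerivAt x hp
    have hI : HasDerivAt (fun t => ⟪q t - qs, L (q t - qs)⟫)
        (⟪q x - qs, L (q' x)⟫ + ⟪q' x, L (q x - qs)⟫) x := hp.inner ℝ hLp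
    have hT1 : HasDerivAt (fun t => t ^ 2 * ⟪q t - qs, L (q t - qs)⟫)
        ((2 : ℕ) * x ^ 1 * ⟪q x - qs, L (q x - qs)⟫
          + x ^ 2 * (⟪q x - qs, L (q' x)⟫ + ⟪q' x, L (q x - qs)⟫)) x :=
      (hasDerivAt_pow 2 x).mul hI
    -- the second derivative from the ODE
    have hqq : q'' x = -(Matrix.toEuclideanLin A (q x - qs)) - (2 / x) • q' x := by
      have h := hode x hx
      have h2 : q'' x + (2 / x) • q' x = -(Matrix.toEuclideanLin A (q x - qs)) :=
        eq_neg_of_add_eq_zero_left h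
      exact eq_sub_of_add_eq h2
    have hu : HasDerivAt (fun t => t • q' t + (q t - qs))
        ((x • q'' x + (1 : ℝ) • q' x) + q' x) x :=
      ((hasDerivAt_id x).smul (hq' x hx)).add hp
    have huval : (x • q'' x + (1 : ℝ) • q' x) + q' x = (-x) • L (q x - qs) := by
      rw [hqq, hLapp]
      match_scalars <;> (field_simp; try ring)
    have hu2 : HasDerivAt (fun t => t • q' t + (q t - qs)) ((-x) • L (q x - qs)) x := by
      rw [← huval]; exact hu
    have hN : HasDerivAt (fun t => ⟪t • q' t + (q t - qs), t • q' t + (q t - qs)⟫)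
        (⟪x • q' x + (q x - qs), (-x) • L (q x - qs)⟫
          + ⟪(-x) • L (q x - qs), x • q' x + (q x - qs)⟫) x := hu2.inner ℝ hu2
    have hVfun : V = fun t => t ^ 2 * ⟪q t - qs, L (q t - qs)⟫
        + ⟪t • q' t + (q t - qs), t • q' t + (q t - qs)⟫ := by
      funext t
      rw [hV t, real_inner_self_eq_norm_sq, hLapp]
    have hD : HasDerivAt V
        (((2 : ℕ) * x ^ 1 * ⟪q x - qs, L (q x - qs)⟫
          + x ^ 2 * (⟪q x - qs, L (q' x)⟫ + ⟪q' x, L (q x - qs)⟫))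
          + (⟪x • q' x + (q x - qs), (-x) • L (q x - qs)⟫
            + ⟪(-x) • L (q x - qs), x • q' x + (q x - qs)⟫)) x := by
      rw [hVfun]; exact hT1.add hN
    have hzero : (((2 : ℕ) * x ^ 1 * ⟪q x - qs, L (q x - qs)⟫
          + x ^ 2 * (⟪q x - qs, L (q' x)⟫ + ⟪q' x, L (q x - qs)⟫))
          + (⟪x • q' x + (q x - qs), (-x) • L (q x - qs)⟫
            + ⟪(-x) • L (q x - qs), x • q' x + (q x - qs)⟫)) = 0 := by
      simp only [hLapp, inner_add_left, inner_add_right, real_inner_smul_left,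
        real_inner_smul_right]
      have h1 := hsym (q x - qs) (q' x)
      have h2 : ⟪Matrix.toEuclideanLin A (q x - qs), q x - qs⟫
          = ⟪q x - qs, Matrix.toEuclideanLin A (q x - qs)⟫ := real_inner_comm _ _
      have h3 : ⟪Matrix.toEuclideanLin A (q x - qs), q' x⟫
          = ⟪q' x, Matrix.toEuclideanLin A (q x - qs)⟫ := real_inner_comm _ _
      push_cast
      nlinarith [h1, h2, h3]
    rw [← hzero]; exact hD
  have key : ∀ s t : ℝ, 0 < s → s ≤ t → V t = V s := by
    intro s t hs hst
    have hc : ContinuousOn V (Set.Icc s t) := fun y hy =>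
      ((hd y (lt_of_lt_of_le hs hy.1)).continuousAt).continuousWithinAt
    have hder : ∀ y ∈ Set.Ico s t, HasDerivWithinAt V 0 (Set.Ici y) y := fun y hy =>
      (hd y (lt_of_lt_of_le hs hy.1)).hasDerivWithinAt
    exact constant_of_has_deriv_right_zero hc hder t (Set.right_mem_Icc.2 hst)
  intro s t hs ht
  rcases le_total s t with h | h
  · exact (key s t hs h).symm
  · exact key t s ht h
end

section
/- Let A be a symmetric positive semidefinite d×d real matrix, h > 0, and let q : ℕ → ℝᵈ satisfy, for all k ≥ 1, the Heavy-ball recursion (k+1) q_{k+1} = (k+1) q_k + (k−1)(q_k − q_{k−1}) − h² k · A q_k (i.e., q_{k+1} = q_k + ((k−1)/(k+1))(q_k − q_{k−1}) − h²(k/(k+1)) A q_k). Then the sequence u_k := k q_k satisfies the Störmer–Verlet recursion u_{k+1} − 2u_k + u_{k−1} = −h² A u_k for all k ≥ 1. -/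
open scoped RealInnerProductSpace

/-- If `q : ℕ → ℝᵈ` satisfies the HB2 recursion
`(k+1) q_{k+1} = (k+1) q_k + (k-1)(q_k - q_{k-1}) - h² k A q_k` for `k ≥ 1`,
then `u_k := k q_k` satisfies the Störmer–Verlet recursion
`u_{k+1} - 2 u_k + u_{k-1} = -h² A u_k` for all `k ≥ 1`. -/
theorem stmt_4 {d : ℕ} (A : Matrix (Fin d) (Fin d) ℝ) (hA : A.PosSemidef)
    (h : ℝ) (hh : 0 < h)
    (q : ℕ → EuclideanSpace ℝ (Fin d))
    (hq : ∀ k : ℕ, 1 ≤ k →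
      ((k : ℝ) + 1) • q (k + 1) =
        ((k : ℝ) + 1) • q k + ((k : ℝ) - 1) • (q k - q (k - 1))
          - (h ^ 2 * (k : ℝ)) • Matrix.toEuclideanLin A (q k))
    (u : ℕ → EuclideanSpace ℝ (Fin d))
    (hu : ∀ k : ℕ, u k = (k : ℝ) • q k) :
    ∀ k : ℕ, 1 ≤ k →
      u (k + 1) - (2 : ℝ) • u k + u (k - 1) = -(h ^ 2) • Matrix.toEuclideanLin A (u k) := by
  intro k hk
  have hq' := hq k hk
  have hc : ((k - 1 : ℕ) : ℝ) = (k : ℝ) - 1 := by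
    push_cast [Nat.cast_sub hk]; ring
  rw [hu (k+1), hu k, hu (k-1), hc, map_smul]
  push_cast
  linear_combination (norm := module) hq'
end

section
/- Let A be a symmetric d×d real matrix, h > 0, and let u : ℕ → ℝᵈ satisfy the Störmer–Verlet recursion u_{k+1} − 2u_k + u_{k−1} = −h² A u_k for all k ≥ 1. Define v_k := (u_k − u_{k−1})/h for k ≥ 1. Then the modified energy E_k := ⟨u_k, A u_k⟩ + ‖v_k‖² − h⟨v_k, A u_k⟩ satisfies E_{k+1} = E_k for all k ≥ 1; that is, the modified energy is exactly conserved along the Störmer–Verlet trajectory. -/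
open scoped RealInnerProductSpace

/-- Along the Störmer–Verlet recursion `u_{k+1} - 2u_k + u_{k-1} = -h² A u_k`
(`A` symmetric), with `v_k := (u_k - u_{k-1})/h`, the modified energy
`E_k := ⟨u_k, A u_k⟩ + ‖v_k‖² - h⟨v_k, A u_k⟩` is exactly conserved: `E_{k+1} = E_k`. -/
theorem stmt_5 {d : ℕ} (A : Matrix (Fin d) (Fin d) ℝ) (hA : A.IsSymm)
    (h : ℝ) (hh : 0 < h)
    (u : ℕ → EuclideanSpace ℝ (Fin d))
    (hu : ∀ k : ℕ, 1 ≤ k →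
      u (k + 1) - (2 : ℝ) • u k + u (k - 1) = -(h ^ 2) • Matrix.toEuclideanLin A (u k))
    (v : ℕ → EuclideanSpace ℝ (Fin d))
    (hv : ∀ k : ℕ, 1 ≤ k → v k = h⁻¹ • (u k - u (k - 1)))
    (E : ℕ → ℝ)
    (hE : ∀ k : ℕ, 1 ≤ k → E k =
      ⟪u k, Matrix.toEuclideanLin A (u k)⟫ + ‖v k‖ ^ 2
        - h * ⟪v k, Matrix.toEuclideanLin A (u k)⟫) :
    ∀ k : ℕ, 1 ≤ k → E (k + 1) = E k := by
  set L := Matrix.toEuclideanLin A with hL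
  have hsym : ∀ x y : EuclideanSpace ℝ (Fin d), ⟪L x, y⟫ = ⟪x, L y⟫ := by
    have hH : A.IsHermitian := by
      rw [Matrix.IsHermitian]; ext i j; simpa using congrFun (congrFun hA i) j
    exact Matrix.isHermitian_iff_isSymmetric.mp hH
  intro k hk
  have hne : h ≠ 0 := ne_of_gt hh
  have e1 : u (k + 1) = (2 : ℝ) • u k - u (k - 1) - h ^ 2 • L (u k) := by
    have := hu k hk
    have : u (k + 1) = -(h ^ 2) • L (u k) + (2 : ℝ) • u k - u (k - 1) := by
      rw [← this]; module
    rw [this]; module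
  have hv1 : v (k + 1) = h⁻¹ • (u (k + 1) - u k) := by
    have := hv (k + 1) (by omega)
    simpa using this
  have hv0 := hv k hk
  rw [hE (k + 1) (by omega), hE k hk, hv1, hv0, e1]
  set x := u k
  set p := u (k - 1)
  simp only [← real_inner_self_eq_norm_sq, map_sub, map_smul, map_add]
  simp only [inner_sub_left, inner_sub_right, inner_add_left, inner_add_right,
    real_inner_smul_left, real_inner_smul_right]
  have r1 : ⟪x, L p⟫ = ⟪p, L x⟫ := by rw [← hsym, real_inner_comm]
  have r2 : ⟪x, L (L x)⟫ = ⟪L x, L x⟫ := by rw [← hsym]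
  have r3 : ⟪p, L (L x)⟫ = ⟪L x, L p⟫ := by rw [← hsym, real_inner_comm]
  have r4 : ⟪L x, x⟫ = ⟪x, L x⟫ := real_inner_comm _ _
  have r5 : ⟪L x, p⟫ = ⟪p, L x⟫ := real_inner_comm _ _
  have r6 : ⟪p, x⟫ = ⟪x, p⟫ := real_inner_comm _ _
  rw [r1, r2, r3, r4, r5, r6]
  field_simp
  ring
end

section
/- Let A be a symmetric d×d real matrix, h ∈ ℝ, and consider the 2d×2d block matrices F = [[I − h²A, hI], [−hA, I]] and P = [[A, −(h/2)A], [−(h/2)A, I]], where I is the d×d identity. Then Fᵀ P F = P; that is, P solves the discrete-time Lyapunov equation Fᵀ P F − P = −Q with Q = 0 for the phase-space map of the Störmer–Verlet discretization of the harmonic oscillator. -/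
open Matrix

/-- For a symmetric real matrix `A` and `h ∈ ℝ`, the matrices
`F = [[I - h²A, hI], [-hA, I]]` and `P = [[A, -(h/2)A], [-(h/2)A, I]]` satisfy
`Fᵀ P F = P`, i.e. `P` solves the discrete-time Lyapunov equation `Fᵀ P F - P = -Q`
with `Q = 0`. -/
theorem stmt_6 {d : ℕ} (A : Matrix (Fin d) (Fin d) ℝ) (hA : A.IsSymm) (h : ℝ)
    (F P : Matrix (Fin d ⊕ Fin d) (Fin d ⊕ Fin d) ℝ)
    (hF : F = Matrix.fromBlocks (1 - h ^ 2 • A) (h • 1) (-(h • A)) 1)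
    (hP : P = Matrix.fromBlocks A (-((h / 2) • A)) (-((h / 2) • A)) 1) :
    Fᵀ * P * F = P := by
  have hAt : Aᵀ = A := hA
  subst hF hP
  simp only [Matrix.fromBlocks_transpose, Matrix.transpose_sub, Matrix.transpose_one,
    Matrix.transpose_smul, Matrix.transpose_neg, hAt, Matrix.fromBlocks_multiply]
  refine Matrix.fromBlocks_inj.mpr ⟨?_, ?_, ?_, ?_⟩ <;>
  · simp only [Matrix.mul_sub, Matrix.sub_mul, Matrix.mul_add, Matrix.add_mul,
      Matrix.smul_mul, Matrix.mul_smul, smul_smul, mul_one, one_mul, neg_mul, mul_neg,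
      smul_neg, neg_neg, neg_smul, Matrix.mul_one, Matrix.one_mul, Matrix.neg_mul,
      Matrix.mul_neg]
    module
end

section
/- Let A be a nonzero symmetric positive semidefinite d×d real matrix, f* ∈ ℝ, q* ∈ ℝᵈ, and f(q) = f* + (1/2)⟨q − q*, A(q − q*)⟩. Let h > 0 with h² < 4/λmax(A), and let q : ℕ → ℝᵈ satisfy the HB2 recursion q_{k+1} = q_k + ((k−1)/(k+1))(q_k − q_{k−1}) − h²(k/(k+1)) A(q_k − q*) for all k ≥ 1. Define for k ≥ 1: V_k := 2k²h²(f(q_k) − f*) + ‖(k−1)(q_k − q_{k−1}) + (q_k − q*)‖² − h² k ⟨A(q_k − q*), (k−1)(q_k − q_{k−1}) + (q_k − q*)⟩. Then V_k ≥ 0 for all k ≥ 1 and V_{k+1} = V_k for all k ≥ 1. -/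
open scoped RealInnerProductSpace

set_option maxHeartbeats 1000000


variable {E : Type*} [NormedAddCommGroup E] [InnerProductSpace ℝ E]

lemma my_conserve (B : E →ₗ[ℝ] E) (hsym : ∀ u v : E, ⟪B u, v⟫ = ⟪u, B v⟫)
    (s k : ℝ) (hk : (1:ℝ) ≤ k) (x v : E) (x' : E)
    (hx' : x' = x + ((k-1)/(k+1)) • v - (s*(k/(k+1))) • B x) :
    s*(k+1)^2*⟪x', B x'⟫ + ‖k • (x' - x) + x'‖^2 - s*(k+1)*⟪B x', k • (x' - x) + x'⟫
      = s*k^2*⟪x, B x⟫ + ‖(k-1) • v + x‖^2 - s*k*⟪B x, (k-1) • v + x⟫ := by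
  have hk1 : k + 1 ≠ 0 := by linarith
  subst hx'
  have c1 : ⟪v, x⟫ = ⟪x, v⟫ := real_inner_comm x v
  have c2 : ⟪B x, x⟫ = ⟪x, B x⟫ := real_inner_comm x _
  have c3 : ⟪B x, v⟫ = ⟪x, B v⟫ := hsym x v
  have c4 : ⟪v, B x⟫ = ⟪x, B v⟫ := (real_inner_comm _ _).trans (hsym x v)
  have c5 : ⟪B v, x⟫ = ⟪x, B v⟫ := real_inner_comm _ _
  have c6 : ⟪B v, v⟫ = ⟪v, B v⟫ := real_inner_comm _ _
  have c7 : ⟪B v, B x⟫ = ⟪B x, B v⟫ := real_inner_comm _ _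
  have c8 : ⟪x, B (B x)⟫ = ⟪B x, B x⟫ := (hsym x (B x)).symm
  have c9 : ⟪B (B x), x⟫ = ⟪B x, B x⟫ := (real_inner_comm _ _).trans c8
  have c10 : ⟪v, B (B x)⟫ = ⟪B x, B v⟫ := by
    rw [← hsym v (B x), real_inner_comm]
  have c11 : ⟪B (B x), v⟫ = ⟪B x, B v⟫ := (real_inner_comm _ _).trans c10
  have c12 : ⟪B (B x), B x⟫ = ⟪B x, B (B x)⟫ := real_inner_comm _ _
  simp only [map_add, map_sub, map_smul, smul_sub, smul_add, smul_smul,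
    ← real_inner_self_eq_norm_sq,
    inner_add_left, inner_add_right, inner_sub_left, inner_sub_right,
    real_inner_smul_left, real_inner_smul_right]
  rw [c1, c2, c3, c4, c5, c6, c7, c8, c9, c10, c11, c12]
  field_simp
  ring

variable {E : Type*} [NormedAddCommGroup E] [InnerProductSpace ℝ E]

lemma my_quad_sum {ι : Type*} [Fintype ι] (b : OrthonormalBasis ι ℝ E)
    (T : E →ₗ[ℝ] E) (μ : ι → ℝ) (heig : ∀ i, T (b i) = μ i • b i)
    (hsym : ∀ u v : E, ⟪T u, v⟫ = ⟪u, T v⟫) (x : E) :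
    ⟪x, T x⟫ = ∑ i, μ i * ⟪b i, x⟫ ^ 2 := by
  rw [← b.sum_inner_mul_inner x (T x)]
  refine Finset.sum_congr rfl fun i _ => ?_
  rw [← hsym, heig, real_inner_smul_left, real_inner_comm x (b i)]
  ring

lemma my_nonneg (B : E →ₗ[ℝ] E) (s k L : ℝ) (hs : 0 ≤ s) (hsL : s * L < 4)
    (x w : E) (ha : 0 ≤ ⟪x, B x⟫) (hp : ⟪B x, B x⟫ ≤ L * ⟪x, B x⟫)
    (hcomm : ⟪B x, w⟫ = ⟪w, B x⟫) :
    0 ≤ s * k ^ 2 * ⟪x, B x⟫ + ‖w‖ ^ 2 - s * k * ⟪B x, w⟫ := by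
  have h0 : (0:ℝ) ≤ ‖w - ((s*k)/2) • B x‖ ^ 2 := sq_nonneg _
  rw [norm_sub_sq_real, real_inner_smul_right, norm_smul, mul_pow] at h0
  have hBn : ‖B x‖ ^ 2 = ⟪B x, B x⟫ := (real_inner_self_eq_norm_sq _).symm
  rw [hBn] at h0
  have hsq : ((|s*k/2| : ℝ)) ^ 2 = (s*k/2)^2 := sq_abs _
  rw [Real.norm_eq_abs, hsq, ← hcomm] at h0
  nlinarith [mul_le_mul_of_nonneg_left hp (sq_nonneg (s*k/2)),
    mul_nonneg (sub_nonneg.2 hsL.le) (mul_nonneg (mul_nonneg hs (sq_nonneg k)) ha)]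


/-- For the quadratic `f(q) = f* + ½⟨q - q*, A(q - q*)⟩` with `A` nonzero
symmetric PSD and step-size `h² < 4/λmax(A)`, along the HB2 iterates the Lyapunov function
`V_k = 2k²h²(f(q_k) - f*) + ‖(k-1)(q_k - q_{k-1}) + (q_k - q*)‖²
 - h²k⟨A(q_k - q*), (k-1)(q_k - q_{k-1}) + (q_k - q*)⟩`
is nonnegative and constant: `V_k ≥ 0` and `V_{k+1} = V_k` for all `k ≥ 1`. -/
theorem stmt_8 {d : ℕ} (A : Matrix (Fin d) (Fin d) ℝ) (hA : A.PosSemidef) (hA0 : A ≠ 0)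
    (fstar : ℝ) (qs : EuclideanSpace ℝ (Fin d)) (f : EuclideanSpace ℝ (Fin d) → ℝ)
    (hf : ∀ x, f x = fstar + (1 / 2) * ⟪x - qs, Matrix.toEuclideanLin A (x - qs)⟫)
    (h : ℝ) (hh : 0 < h)
    (hstep : h ^ 2 < 4 / (⨆ i, hA.isHermitian.eigenvalues i))
    (q : ℕ → EuclideanSpace ℝ (Fin d))
    (hq : ∀ k : ℕ, 1 ≤ k →
      q (k + 1) = q k + (((k : ℝ) - 1) / ((k : ℝ) + 1)) • (q k - q (k - 1))
        - (h ^ 2 * ((k : ℝ) / ((k : ℝ) + 1))) • Matrix.toEuclideanLin A (q k - qs))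
    (V : ℕ → ℝ)
    (hV : ∀ k : ℕ, 1 ≤ k → V k =
      2 * (k : ℝ) ^ 2 * h ^ 2 * (f (q k) - fstar)
        + ‖((k : ℝ) - 1) • (q k - q (k - 1)) + (q k - qs)‖ ^ 2
        - h ^ 2 * (k : ℝ) *
            ⟪Matrix.toEuclideanLin A (q k - qs),
              ((k : ℝ) - 1) • (q k - q (k - 1)) + (q k - qs)⟫) :
    ∀ k : ℕ, 1 ≤ k → 0 ≤ V k ∧ V (k + 1) = V k := by
  set B : EuclideanSpace ℝ (Fin d) →ₗ[ℝ] EuclideanSpace ℝ (Fin d) :=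
    Matrix.toEuclideanLin A with hB
  have hsym : ∀ u v : EuclideanSpace ℝ (Fin d), ⟪B u, v⟫ = ⟪u, B v⟫ :=
    Matrix.isHermitian_iff_isSymmetric.1 hA.isHermitian
  -- nonempty index
  have hd : d ≠ 0 := by
    rintro rfl
    exact hA0 (Subsingleton.elim _ _)
  haveI : Nonempty (Fin d) := Fin.pos_iff_nonempty.1 (Nat.pos_of_ne_zero hd)
  set L : ℝ := ⨆ i, hA.isHermitian.eigenvalues i with hL
  set b := hA.isHermitian.eigenvectorBasis with hb
  have heig : ∀ i, B (b i) = hA.isHermitian.eigenvalues i • b i := by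
    intro i
    ext j
    have := congrFun (hA.isHermitian.mulVec_eigenvectorBasis i) j
    simpa [hB, Matrix.toEuclideanLin_apply] using this
  have heig2 : ∀ i, (B ∘ₗ B) (b i) = (hA.isHermitian.eigenvalues i ^ 2) • b i := by
    intro i
    simp [LinearMap.comp_apply, heig, map_smul, smul_smul, sq]
  have hsym2 : ∀ u v : EuclideanSpace ℝ (Fin d), ⟪(B ∘ₗ B) u, v⟫ = ⟪u, (B ∘ₗ B) v⟫ := by
    intro u v
    simp only [LinearMap.comp_apply]
    rw [hsym, hsym]
  have hev_nonneg : ∀ i, 0 ≤ hA.isHermitian.eigenvalues i := hA.eigenvalues_nonneg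
  have hev_le : ∀ i, hA.isHermitian.eigenvalues i ≤ L :=
    fun i => le_ciSup (Set.Finite.bddAbove (Set.finite_range _)) i
  have ha_nonneg : ∀ x, 0 ≤ ⟪x, B x⟫ := by
    intro x
    rw [my_quad_sum b B _ heig hsym x]
    exact Finset.sum_nonneg fun i _ => mul_nonneg (hev_nonneg i) (sq_nonneg _)
  have hbound : ∀ x, ⟪B x, B x⟫ ≤ L * ⟪x, B x⟫ := by
    intro x
    have h1 : ⟪B x, B x⟫ = ⟪x, (B ∘ₗ B) x⟫ := by
      rw [LinearMap.comp_apply, hsym]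
    rw [h1, my_quad_sum b (B ∘ₗ B) _ heig2 hsym2 x, my_quad_sum b B _ heig hsym x,
      Finset.mul_sum]
    refine Finset.sum_le_sum fun i _ => ?_
    nlinarith [mul_nonneg (mul_nonneg (sub_nonneg.2 (hev_le i)) (hev_nonneg i))
      (sq_nonneg (⟪b i, x⟫ : ℝ))]
  -- L > 0
  have hBne : ∃ x, B x ≠ 0 := by
    by_contra hc
    push_neg at hc
    apply hA0
    have : B = 0 := LinearMap.ext fun x => hc x
    rw [hB] at this
    exact (LinearEquiv.map_eq_zero_iff _).1 this
  obtain ⟨x0, hx0⟩ := hBne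
  have hLpos : 0 < L := by
    have hn0 : 0 < ‖B x0‖ := norm_pos_iff.2 hx0
    have hp0 : 0 < ⟪B x0, B x0⟫ := by rw [real_inner_self_eq_norm_sq]; positivity
    have := hbound x0
    have := ha_nonneg x0
    nlinarith
  have hsL : h ^ 2 * L < 4 := by
    rw [lt_div_iff₀ hLpos] at hstep
    exact hstep
  intro k hk
  have hk1 : (1:ℝ) ≤ (k:ℝ) := by exact_mod_cast hk
  set x : EuclideanSpace ℝ (Fin d) := q k - qs with hx
  set v : EuclideanSpace ℝ (Fin d) := q k - q (k-1) with hv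
  set w : EuclideanSpace ℝ (Fin d) := ((k:ℝ)-1) • v + x with hw
  have hVk : V k = h^2*(k:ℝ)^2*⟪x, B x⟫ + ‖w‖^2 - h^2*(k:ℝ)*⟪B x, w⟫ := by
    rw [hV k hk, hf]
    ring
  constructor
  · rw [hVk]
    have := my_nonneg B (h^2) (k:ℝ) L (sq_nonneg h) hsL x w (ha_nonneg x) (hbound x)
      (real_inner_comm w (B x))
    linarith
  · -- conservation
    have hx' : q (k+1) - qs = x + (((k:ℝ)-1)/((k:ℝ)+1)) • v - (h^2*((k:ℝ)/((k:ℝ)+1))) • B x := by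
      rw [hq k hk, hx, hv]
      abel
    have hdiff : q (k+1) - q k = (q (k+1) - qs) - x := by
      rw [hx]; abel
    have hVk1 : V (k+1) = h^2*((k:ℝ)+1)^2*⟪q (k+1) - qs, B (q (k+1) - qs)⟫
        + ‖(k:ℝ) • ((q (k+1) - qs) - x) + (q (k+1) - qs)‖^2
        - h^2*((k:ℝ)+1)*⟪B (q (k+1) - qs), (k:ℝ) • ((q (k+1) - qs) - x) + (q (k+1) - qs)⟫ := by
      rw [hV (k+1) (by omega), hf]
      have e1 : ((k:ℕ)+1) - 1 = k := by omega
      rw [e1, ← hdiff]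
      push_cast
      ring_nf
    rw [hVk1, hVk]
    have := my_conserve B hsym (h^2) (k:ℝ) hk1 x v (q (k+1) - qs) hx'
    linarith
end

section
/- Let f : ℝᵈ → ℝ be differentiable, r ≥ 2, h > 0, q* ∈ ℝᵈ, and let q : ℕ → ℝᵈ satisfy the HBr recursion q_{k+1} = q_k + ((k−1)/(k+r−1))(q_k − q_{k−1}) − h²((k + (r−2)/2)/(k+r−1)) ∇f(q_k) for all k ≥ 1. Define V²_k := ‖(k−1)(q_k − q_{k−1}) + (r−1)(q_k − q*)‖². Then for all k ≥ 1: V²_{k+1} − V²_k = −h²(r−1)(2k+r−2)⟨∇f(q_k), q_k − q*⟩ − h²(k−1)(2k+r−2)⟨∇f(q_k), q_k − q_{k−1}⟩ + (h⁴/4)(2k+r−2)²‖∇f(q_k)‖². -/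
open scoped RealInnerProductSpace

/-- Lemma 1: For any differentiable `f` with gradient `g`, `r ≥ 2`, `h > 0`,
along the HBr iterates, with `V²_k = ‖(k-1)(q_k - q_{k-1}) + (r-1)(q_k - q*)‖²`, one has
`V²_{k+1} - V²_k = -h²(r-1)(2k+r-2)⟨∇f(q_k), q_k - q*⟩
 - h²(k-1)(2k+r-2)⟨∇f(q_k), q_k - q_{k-1}⟩ + (h⁴/4)(2k+r-2)²‖∇f(q_k)‖²`. -/
theorem stmt_9 {d : ℕ} (f : EuclideanSpace ℝ (Fin d) → ℝ)
    (g : EuclideanSpace ℝ (Fin d) → EuclideanSpace ℝ (Fin d))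
    (hgrad : ∀ x, HasGradientAt f (g x) x)
    (r : ℝ) (hr : 2 ≤ r) (h : ℝ) (hh : 0 < h) (qs : EuclideanSpace ℝ (Fin d))
    (q : ℕ → EuclideanSpace ℝ (Fin d))
    (hq : ∀ k : ℕ, 1 ≤ k →
      q (k + 1) = q k + (((k : ℝ) - 1) / ((k : ℝ) + r - 1)) • (q k - q (k - 1))
        - (h ^ 2 * (((k : ℝ) + (r - 2) / 2) / ((k : ℝ) + r - 1))) • g (q k))
    (V2 : ℕ → ℝ)
    (hV2 : ∀ k : ℕ, 1 ≤ k → V2 k =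
      ‖((k : ℝ) - 1) • (q k - q (k - 1)) + (r - 1) • (q k - qs)‖ ^ 2) :
    ∀ k : ℕ, 1 ≤ k →
      V2 (k + 1) - V2 k =
        -(h ^ 2) * (r - 1) * (2 * (k : ℝ) + r - 2) * ⟪g (q k), q k - qs⟫
          - h ^ 2 * ((k : ℝ) - 1) * (2 * (k : ℝ) + r - 2) * ⟪g (q k), q k - q (k - 1)⟫
          + (h ^ 4 / 4) * (2 * (k : ℝ) + r - 2) ^ 2 * ‖g (q k)‖ ^ 2 := by
  intro k hk
  have hk' : (1:ℝ) ≤ (k:ℝ) := by exact_mod_cast hk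
  have hc : (k:ℝ) + r - 1 ≠ 0 := by nlinarith
  have hVk := hV2 k hk
  have hVk1 := hV2 (k+1) (by omega)
  simp only [Nat.add_sub_cancel] at hVk1
  set v := g (q k) with hv
  set a := q k - q (k-1) with ha
  set b := q k - qs with hb
  set s : ℝ := h^2 * (2*(k:ℝ)+r-2)/2 with hs
  have key : (((k:ℕ)+1 : ℝ) - 1) • (q (k+1) - q k) + (r-1) • (q (k+1) - qs)
      = (((k : ℝ) - 1) • a + (r - 1) • b) - s • v := by
    rw [hq k hk, ha, hb, hs]
    match_scalars <;> field_simp <;> ring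
  push_cast at hVk1
  rw [hVk1, hVk, key]
  have expand : ‖(((k : ℝ) - 1) • a + (r - 1) • b) - s • v‖^2
      - ‖((k : ℝ) - 1) • a + (r - 1) • b‖^2
      = -2*s*(((k:ℝ)-1)*⟪v,a⟫ + (r-1)*⟪v,b⟫) + s^2*‖v‖^2 := by
    rw [norm_sub_sq_real, inner_add_left, real_inner_smul_left, real_inner_smul_left,
      real_inner_smul_right, real_inner_smul_right, norm_smul, mul_pow, Real.norm_eq_abs, sq_abs,
      real_inner_comm a v, real_inner_comm b v]
    ring
  rw [expand, hs]
  ring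
end

section
/- Let A be a symmetric positive semidefinite d×d real matrix, f* ∈ ℝ, q* ∈ ℝᵈ, f(q) = f* + (1/2)⟨q − q*, A(q − q*)⟩, r ≥ 2, h > 0, and let q : ℕ → ℝᵈ satisfy the HBr recursion q_{k+1} = q_k + ((k−1)/(k+r−1))(q_k − q_{k−1}) − h²((k + (r−2)/2)/(k+r−1)) A(q_k − q*) for all k ≥ 1. Define V¹_k := h²(k+r−2)(k−1)⟨q_{k−1} − q*, A(q_k − q*)⟩. Then for all k ≥ 1: V¹_{k+1} − V¹_k = h²(2k+r−2)⟨q_k − q*, A(q_k − q*)⟩ + h²(k−1)(2k+r−2)⟨q_k − q*, A(q_k − q_{k−1})⟩ − (h⁴/2)(2k+r−2) k ‖A(q_k − q*)‖². -/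
open scoped RealInnerProductSpace

/-- Lemma 2: For the quadratic `f(q) = f* + ½⟨q - q*, A(q - q*)⟩` with `A`
symmetric PSD, along the HBr iterates, with
`V¹_k := h²(k+r-2)(k-1)⟨q_{k-1} - q*, A(q_k - q*)⟩`, one has
`V¹_{k+1} - V¹_k = h²(2k+r-2)⟨q_k - q*, A(q_k - q*)⟩
 + h²(k-1)(2k+r-2)⟨q_k - q*, A(q_k - q_{k-1})⟩ - (h⁴/2)(2k+r-2)k‖A(q_k - q*)‖²`. -/
theorem stmt_11 {d : ℕ} (A : Matrix (Fin d) (Fin d) ℝ) (hA : A.PosSemidef)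
    (fstar : ℝ) (qs : EuclideanSpace ℝ (Fin d)) (f : EuclideanSpace ℝ (Fin d) → ℝ)
    (hf : ∀ x, f x = fstar + (1 / 2) * ⟪x - qs, Matrix.toEuclideanLin A (x - qs)⟫)
    (r : ℝ) (hr : 2 ≤ r) (h : ℝ) (hh : 0 < h)
    (q : ℕ → EuclideanSpace ℝ (Fin d))
    (hq : ∀ k : ℕ, 1 ≤ k →
      q (k + 1) = q k + (((k : ℝ) - 1) / ((k : ℝ) + r - 1)) • (q k - q (k - 1))
        - (h ^ 2 * (((k : ℝ) + (r - 2) / 2) / ((k : ℝ) + r - 1))) •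
            Matrix.toEuclideanLin A (q k - qs))
    (V1 : ℕ → ℝ)
    (hV1 : ∀ k : ℕ, 1 ≤ k → V1 k =
      h ^ 2 * ((k : ℝ) + r - 2) * ((k : ℝ) - 1) *
        ⟪q (k - 1) - qs, Matrix.toEuclideanLin A (q k - qs)⟫) :
    ∀ k : ℕ, 1 ≤ k →
      V1 (k + 1) - V1 k =
        h ^ 2 * (2 * (k : ℝ) + r - 2) * ⟪q k - qs, Matrix.toEuclideanLin A (q k - qs)⟫
          + h ^ 2 * ((k : ℝ) - 1) * (2 * (k : ℝ) + r - 2) *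
              ⟪q k - qs, Matrix.toEuclideanLin A (q k - q (k - 1))⟫
          - (h ^ 4 / 2) * (2 * (k : ℝ) + r - 2) * (k : ℝ) *
              ‖Matrix.toEuclideanLin A (q k - qs)‖ ^ 2 := by

  intro k hk
  have hsym : (Matrix.toEuclideanLin A).IsSymmetric := by
    rw [← Matrix.isHermitian_iff_isSymmetric]; exact hA.1
  have hkR : (1 : ℝ) ≤ (k : ℝ) := by exact_mod_cast hk
  have hden : ((k : ℝ) + r - 1) ≠ 0 := by linarith
  have hcast : ((k - 1 : ℕ) : ℝ) = (k : ℝ) - 1 := by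
    have := Nat.cast_sub (R := ℝ) hk; simpa using this
  have e1 := hV1 (k + 1) (by omega)
  have e2 := hV1 k hk
  have e3 := hq k hk
  simp only [Nat.add_sub_cancel, Nat.cast_add, Nat.cast_one] at e1
  rw [e1, e2, e3]
  set L := Matrix.toEuclideanLin A with hL
  have harg : q k + (((k : ℝ) - 1) / ((k : ℝ) + r - 1)) • (q k - q (k - 1))
      - (h ^ 2 * (((k : ℝ) + (r - 2) / 2) / ((k : ℝ) + r - 1))) • L (q k - qs) - qs
      = (q k - qs) + (((k : ℝ) - 1) / ((k : ℝ) + r - 1)) • (q k - q (k - 1))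
        - (h ^ 2 * (((k : ℝ) + (r - 2) / 2) / ((k : ℝ) + r - 1))) • L (q k - qs) := by
    abel
  rw [harg]
  have hprev : q (k - 1) - qs = (q k - qs) - (q k - q (k - 1)) := by abel
  rw [hprev]
  set x := q k - qs with hx
  set y := q k - q (k - 1) with hy
  have h1 : ⟪x, L (L x)⟫ = ‖L x‖ ^ 2 := by
    rw [← hsym x (L x), real_inner_self_eq_norm_sq]
  have h2 : ⟪x - y, L x⟫ = ⟪x, L x⟫ - ⟪x, L y⟫ := by
    have h2' : ⟪y, L x⟫ = ⟪x, L y⟫ := by rw [← hsym y x]; exact real_inner_comm _ _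
    rw [inner_sub_left, h2']
  simp only [map_add, map_sub, map_smul, inner_add_right, inner_sub_right, inner_smul_right]
  rw [h1, h2]
  field_simp
  ring
end

section
/- Let A be a symmetric positive semidefinite d×d real matrix, f* ∈ ℝ, q* ∈ ℝᵈ, f(q) = f* + (1/2)⟨q − q*, A(q − q*)⟩, r ≥ 2, h > 0, and let q : ℕ → ℝᵈ satisfy the HBr recursion q_{k+1} = q_k + ((k−1)/(k+r−1))(q_k − q_{k−1}) − h²((k + (r−2)/2)/(k+r−1)) A(q_k − q*) for all k ≥ 1. Define for k ≥ 1: V_k := 2(k+r−2)²h²(f(q_k) − f*) + ‖(k−1)(q_k − q_{k−1}) + (r−1)(q_k − q*)‖² − h²(k+r−2)⟨A(q_k − q*), (k−1)(q_k − q_{k−1}) + (r−1)(q_k − q*)⟩. Then for all k ≥ 1: V_{k+1} − V_k = −h²(r−2)(2k+r−2)⟨q_k − q*, B(q_k − q*)⟩, where B := A − (h²/4)A². -/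
open scoped RealInnerProductSpace

set_option maxHeartbeats 2000000 in
/-- For the quadratic `f(q) = f* + ½⟨q - q*, A(q - q*)⟩` with `A` symmetric
PSD, along the HBr iterates, the Lyapunov function
`V_k = 2(k+r-2)²h²(f(q_k) - f*) + ‖(k-1)(q_k - q_{k-1}) + (r-1)(q_k - q*)‖²
 - h²(k+r-2)⟨A(q_k - q*), (k-1)(q_k - q_{k-1}) + (r-1)(q_k - q*)⟩`
satisfies `V_{k+1} - V_k = -h²(r-2)(2k+r-2)⟨q_k - q*, B(q_k - q*)⟩` with
`B := A - (h²/4)A²`, exactly and for all `k ≥ 1`. -/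
theorem stmt_12 {d : ℕ} (A : Matrix (Fin d) (Fin d) ℝ) (hA : A.PosSemidef)
    (fstar : ℝ) (qs : EuclideanSpace ℝ (Fin d)) (f : EuclideanSpace ℝ (Fin d) → ℝ)
    (hf : ∀ x, f x = fstar + (1 / 2) * ⟪x - qs, Matrix.toEuclideanLin A (x - qs)⟫)
    (r : ℝ) (hr : 2 ≤ r) (h : ℝ) (hh : 0 < h)
    (q : ℕ → EuclideanSpace ℝ (Fin d))
    (hq : ∀ k : ℕ, 1 ≤ k →
      q (k + 1) = q k + (((k : ℝ) - 1) / ((k : ℝ) + r - 1)) • (q k - q (k - 1))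
        - (h ^ 2 * (((k : ℝ) + (r - 2) / 2) / ((k : ℝ) + r - 1))) •
            Matrix.toEuclideanLin A (q k - qs))
    (B : Matrix (Fin d) (Fin d) ℝ) (hB : B = A - (h ^ 2 / 4) • (A * A))
    (V : ℕ → ℝ)
    (hV : ∀ k : ℕ, 1 ≤ k → V k =
      2 * ((k : ℝ) + r - 2) ^ 2 * h ^ 2 * (f (q k) - fstar)
        + ‖((k : ℝ) - 1) • (q k - q (k - 1)) + (r - 1) • (q k - qs)‖ ^ 2
        - h ^ 2 * ((k : ℝ) + r - 2) *
            ⟪Matrix.toEuclideanLin A (q k - qs),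
              ((k : ℝ) - 1) • (q k - q (k - 1)) + (r - 1) • (q k - qs)⟫) :
    ∀ k : ℕ, 1 ≤ k →
      V (k + 1) - V k =
        -(h ^ 2) * (r - 2) * (2 * (k : ℝ) + r - 2) *
          ⟪q k - qs, Matrix.toEuclideanLin B (q k - qs)⟫ := by
  intro k hk
  have hk1 : (1 : ℝ) ≤ (k : ℝ) := by exact_mod_cast hk
  set T : EuclideanSpace ℝ (Fin d) →ₗ[ℝ] EuclideanSpace ℝ (Fin d) :=
    Matrix.toEuclideanLin A with hT
  have hsym : ∀ a b : EuclideanSpace ℝ (Fin d), ⟪T a, b⟫ = ⟪a, T b⟫ :=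
    (Matrix.isHermitian_iff_isSymmetric.mp hA.1)
  have hmul : ∀ y : EuclideanSpace ℝ (Fin d),
      Matrix.toEuclideanLin (A * A) y = T (T y) := by
    intro y
    simp [hT, Matrix.toEuclideanLin_apply, Matrix.mulVec_mulVec]
  set x : EuclideanSpace ℝ (Fin d) := q k - qs with hx
  set v : EuclideanSpace ℝ (Fin d) := q k - q (k - 1) with hv
  set D : ℝ := (k : ℝ) + r - 1 with hD
  have hden : D ≠ 0 := by rw [hD]; nlinarith
  set b1 : ℝ := h ^ 2 * ((k : ℝ) + (r - 2) / 2) with hb1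
  set m : EuclideanSpace ℝ (Fin d) := ((k : ℝ) - 1) • v - b1 • T x with hm
  have hstep : q (k + 1) = q k + D⁻¹ • m := by
    have hden' : ((k : ℝ) + r - 1) ≠ 0 := by rw [hD] at hden; exact hden
    rw [hq k hk, hm, hb1, hD]
    rw [show q k - qs = x from rfl, show q k - q (k - 1) = v from rfl]
    match_scalars <;> field_simp <;> left <;> ring
  have hx' : q (k + 1) - qs = x + D⁻¹ • m := by rw [hstep, hx]; abel
  have hv' : q (k + 1) - q k = D⁻¹ • m := by rw [hstep]; abel
  have hVk1 := hV (k + 1) (by omega)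
  have hVk := hV k hk
  rw [hf (q (k + 1))] at hVk1
  rw [hf (q k)] at hVk
  simp only [Nat.add_sub_cancel, Nat.cast_add, Nat.cast_one] at hVk1
  rw [hx', hv'] at hVk1
  rw [show q k - q (k - 1) = v from rfl, show q k - qs = x from rfl] at hVk
  have hD2 : (k : ℝ) + 1 + r - 2 = D := by rw [hD]; ring
  have hcomb : ((k : ℝ) + 1 - 1) • (D⁻¹ • m) + (r - 1) • (x + D⁻¹ • m)
      = (r - 1) • x + m := by
    have hDD : D⁻¹ * D = 1 := inv_mul_cancel₀ hden
    match_scalars <;> field_simp <;> rw [hD] <;> ring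
  rw [hcomb] at hVk1
  have em : ⟪m, T x⟫ = ⟪x, T m⟫ := by rw [← hsym, real_inner_comm]
  have hf' : ⟪x + D⁻¹ • m, T (x + D⁻¹ • m)⟫
      = ⟪x, T x⟫ + 2 * D⁻¹ * ⟪x, T m⟫ + D⁻¹ ^ 2 * ⟪m, T m⟫ := by
    simp only [map_add, map_smul, inner_add_left, inner_add_right,
      real_inner_smul_left, real_inner_smul_right, em]
    ring
  rw [hf'] at hVk1
  have hTx' : T (x + D⁻¹ • m) = T x + D⁻¹ • T m := by
    simp only [map_add, map_smul]
  rw [hTx', inner_add_left, real_inner_smul_left] at hVk1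
  rw [hD2] at hVk1
  -- now remove all occurrences of D⁻¹ from hVk1
  have hVk1' : V (k + 1)
      = h ^ 2 * (D ^ 2 * ⟪x, T x⟫ + 2 * D * ⟪x, T m⟫ + ⟪m, T m⟫)
        + ‖(r - 1) • x + m‖ ^ 2
        - h ^ 2 * (D * ⟪T x, (r - 1) • x + m⟫ + ⟪T m, (r - 1) • x + m⟫) := by
    rw [hVk1]
    have e1 : 2 * D ^ 2 * h ^ 2 *
        (fstar + 1 / 2 * (⟪x, T x⟫ + 2 * D⁻¹ * ⟪x, T m⟫ + D⁻¹ ^ 2 * ⟪m, T m⟫) - fstar)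
        = h ^ 2 * (D ^ 2 * ⟪x, T x⟫ + 2 * D * ⟪x, T m⟫ + ⟪m, T m⟫) := by
      field_simp
      ring
    have e2 : h ^ 2 * D * (⟪T x, (r - 1) • x + m⟫ + D⁻¹ * ⟪T m, (r - 1) • x + m⟫)
        = h ^ 2 * (D * ⟪T x, (r - 1) • x + m⟫ + ⟪T m, (r - 1) • x + m⟫) := by
      field_simp
    rw [e1, e2]
  rw [hVk1', hVk, hB]
  have hBx : Matrix.toEuclideanLin (A - (h ^ 2 / 4) • (A * A)) x
      = T x - (h ^ 2 / 4) • T (T x) := by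
    simp only [map_sub, map_smul, LinearMap.sub_apply, LinearMap.smul_apply, hmul, hT]
  rw [hBx]
  -- expand everything into inner-product atoms
  have c1 : ⟪v, x⟫ = ⟪x, v⟫ := real_inner_comm x v
  have c2 : ⟪x, T v⟫ = ⟪v, T x⟫ := by rw [← hsym, real_inner_comm]
  have c3 : ⟪x, T (T v)⟫ = ⟪v, T (T x)⟫ := by
    rw [← hsym, real_inner_comm, hsym]
  simp only [hm, ← real_inner_self_eq_norm_sq, map_add, map_sub, map_smul,
    inner_add_left, inner_add_right, inner_sub_left, inner_sub_right,
    real_inner_smul_left, real_inner_smul_right, hsym, c1, c2, c3, smul_smul,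
    hD, hb1]
  ring
end

section
/- Let A be a nonzero symmetric positive semidefinite d×d real matrix, f* ∈ ℝ, q* ∈ ℝᵈ, f(q) = f* + (1/2)⟨q − q*, A(q − q*)⟩, r ≥ 2, and h > 0 with h² ≤ 4/λmax(A). Let q : ℕ → ℝᵈ satisfy the HBr recursion q_{k+1} = q_k + ((k−1)/(k+r−1))(q_k − q_{k−1}) − h²((k + (r−2)/2)/(k+r−1)) A(q_k − q*) for all k ≥ 1, and define for k ≥ 1: V_k := 2(k+r−2)²h²(f(q_k) − f*) + ‖(k−1)(q_k − q_{k−1}) + (r−1)(q_k − q*)‖² − h²(k+r−2)⟨A(q_k − q*), (k−1)(q_k − q_{k−1}) + (r−1)(q_k − q*)⟩. Then V_{k+1} ≤ V_k for all k ≥ 1. -/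
open scoped RealInnerProductSpace

set_option maxHeartbeats 1000000


lemma hbr_aux {E : Type*} [NormedAddCommGroup E] [InnerProductSpace ℝ E]
    (T : E →ₗ[ℝ] E) (hsym : ∀ v w : E, ⟪T v, w⟫ = ⟪v, T w⟫)
    (fstar K r h : ℝ) (X U w : E) (hn : K + r - 1 ≠ 0)
    (hw : w = ((K - 1) / (K + r - 1)) • U - (h ^ 2 * ((K + (r - 2) / 2) / (K + r - 1))) • T X) :
    2 * ((K + 1) + r - 2) ^ 2 * h ^ 2 * (fstar + 1 / 2 * ⟪X + w, T (X + w)⟫ - fstar)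
      + ‖((K + 1) - 1) • w + (r - 1) • (X + w)‖ ^ 2
      - h ^ 2 * ((K + 1) + r - 2) * ⟪T (X + w), ((K + 1) - 1) • w + (r - 1) • (X + w)⟫
    = (2 * (K + r - 2) ^ 2 * h ^ 2 * (fstar + 1 / 2 * ⟪X, T X⟫ - fstar)
        + ‖(K - 1) • U + (r - 1) • X‖ ^ 2
        - h ^ 2 * (K + r - 2) * ⟪T X, (K - 1) • U + (r - 1) • X⟫)
      - ((K + r - 2) ^ 2 - K ^ 2) / 4 * (h ^ 2 * (4 * ⟪X, T X⟫ - h ^ 2 * ⟪T X, T X⟫)) := by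
  have c1 : ⟪T X, X⟫ = ⟪X, T X⟫ := real_inner_comm _ _
  have c2 : ⟪U, X⟫ = ⟪X, U⟫ := real_inner_comm _ _
  have c3 : ⟪T X, U⟫ = ⟪U, T X⟫ := real_inner_comm _ _
  have c4 : ⟪X, T U⟫ = ⟪U, T X⟫ := by rw [← hsym, real_inner_comm]
  have c5 : ⟪T U, X⟫ = ⟪U, T X⟫ := hsym U X
  have c6 : ⟪X, T (T X)⟫ = ⟪T X, T X⟫ := by rw [← hsym]
  have c7 : ⟪T (T X), X⟫ = ⟪T X, T X⟫ := by rw [real_inner_comm, ← hsym]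
  have c8 : ⟪U, T (T X)⟫ = ⟪T U, T X⟫ := by rw [← hsym]
  have c9 : ⟪T (T X), U⟫ = ⟪T U, T X⟫ := by rw [real_inner_comm]; exact c8
  have c10 : ⟪T (T X), T X⟫ = ⟪T X, T (T X)⟫ := real_inner_comm _ _
  have c11 : ⟪T U, U⟫ = ⟪U, T U⟫ := real_inner_comm _ _
  have c12 : ⟪T X, T U⟫ = ⟪T U, T X⟫ := real_inner_comm _ _
  have e1 : ((K + 1) - 1) • w + (r - 1) • (X + w)
      = (((K - 1) • U + (r - 1) • X) - (h ^ 2 * (K + (r - 2) / 2)) • T X) := by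
    rw [hw]; match_scalars <;> (field_simp; try ring; try exact Or.inl trivial)
  have e2 : X + w = (K + r - 1)⁻¹ •
      ((((K - 1) • U + (r - 1) • X) - (h ^ 2 * (K + (r - 2) / 2)) • T X) + K • X) := by
    rw [hw]; match_scalars <;> (field_simp; try ring; try exact Or.inl trivial)
  have hcan : ∀ t : ℝ, 2 * (K + r - 1) ^ 2 * h ^ 2 *
      (fstar + 1 / 2 * ((K + r - 1)⁻¹ * ((K + r - 1)⁻¹ * t)) - fstar) = h ^ 2 * t := by
    intro t; field_simp; ring
  have hcan2 : ∀ t : ℝ, h ^ 2 * (K + r - 1) * ((K + r - 1)⁻¹ * t) = h ^ 2 * t := by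
    intro t; field_simp
  rw [e1, show K + 1 + r - 2 = K + r - 1 from by ring, e2]
  simp only [map_smul, real_inner_smul_left, real_inner_smul_right]
  rw [hcan, hcan2]
  simp only [← real_inner_self_eq_norm_sq]
  simp only [map_add, map_sub, map_smul, inner_add_left, inner_add_right, inner_sub_left,
    inner_sub_right, real_inner_smul_left, real_inner_smul_right]
  simp only [c1, c2, c3, c4, c5, c6, c7, c8, c9, c10, c11, c12]
  ring


lemma hbr_key {d : ℕ} (A : Matrix (Fin d) (Fin d) ℝ) (hA : A.PosSemidef) (hA0 : A ≠ 0)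
    (h : ℝ) (hstep : h ^ 2 ≤ 4 / (⨆ i, hA.isHermitian.eigenvalues i))
    (v : EuclideanSpace ℝ (Fin d)) :
    h ^ 2 * ⟪Matrix.toEuclideanLin A v, Matrix.toEuclideanLin A v⟫
      ≤ 4 * ⟪v, Matrix.toEuclideanLin A v⟫ := by
  have hsym : ∀ x y : EuclideanSpace ℝ (Fin d),
      ⟪Matrix.toEuclideanLin A x, y⟫ = ⟪x, Matrix.toEuclideanLin A y⟫ :=
    Matrix.isHermitian_iff_isSymmetric.1 hA.isHermitian
  set b := hA.isHermitian.eigenvectorBasis with hb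
  set lam := hA.isHermitian.eigenvalues with hlam
  have heig : ∀ j, Matrix.toEuclideanLin A (b j) = lam j • b j := by
    intro j
    ext i
    have := congrFun (hA.isHermitian.mulVec_eigenvectorBasis j) i
    simpa [Matrix.toEuclideanLin_apply] using this
  have hbdd : BddAbove (Set.range lam) := (Set.finite_range _).bddAbove
  have hle : ∀ i, lam i ≤ ⨆ i, lam i := fun i => le_ciSup hbdd i
  have hnn : ∀ i, 0 ≤ lam i := hA.eigenvalues_nonneg
  have hpos : 0 < ⨆ i, lam i := by
    by_contra hnot
    push_neg at hnot
    have hz : ∀ i, lam i = 0 := fun i => le_antisymm ((hle i).trans hnot) (hnn i)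
    apply hA0
    have hdiag : Matrix.diagonal (RCLike.ofReal ∘ lam) = (0 : Matrix (Fin d) (Fin d) ℝ) := by
      have : (RCLike.ofReal ∘ lam : Fin d → ℝ) = fun _ => 0 := funext fun i => by simp [hz i]
      rw [this]
      exact Matrix.diagonal_zero
    rw [hA.isHermitian.spectral_theorem, hdiag, map_zero]
  have hmax : h ^ 2 * (⨆ i, lam i) ≤ 4 := (le_div_iff₀ hpos).1 hstep
  have hterm : ∀ j, ⟪b j, Matrix.toEuclideanLin A v⟫ = lam j * ⟪v, b j⟫ := by
    intro j
    rw [← hsym, heig j, real_inner_smul_left, real_inner_comm]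
  have hterm' : ∀ j, ⟪Matrix.toEuclideanLin A v, b j⟫ = lam j * ⟪v, b j⟫ := by
    intro j
    rw [real_inner_comm]
    exact hterm j
  have e1 : ⟪v, Matrix.toEuclideanLin A v⟫ = ∑ j, lam j * (⟪v, b j⟫ * ⟪v, b j⟫) := by
    rw [← b.sum_inner_mul_inner v (Matrix.toEuclideanLin A v)]
    exact Finset.sum_congr rfl fun j _ => by rw [hterm j]; ring
  have e2 : ⟪Matrix.toEuclideanLin A v, Matrix.toEuclideanLin A v⟫
      = ∑ j, lam j * lam j * (⟪v, b j⟫ * ⟪v, b j⟫) := by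
    rw [← b.sum_inner_mul_inner (Matrix.toEuclideanLin A v) (Matrix.toEuclideanLin A v)]
    exact Finset.sum_congr rfl fun j _ => by rw [hterm j, hterm' j]; ring
  rw [e1, e2, Finset.mul_sum, Finset.mul_sum]
  apply Finset.sum_le_sum
  intro j _
  have h1 : h ^ 2 * lam j ≤ 4 := le_trans
    (mul_le_mul_of_nonneg_left (hle j) (sq_nonneg h)) hmax
  have h2 : 0 ≤ lam j * (⟪v, b j⟫ * ⟪v, b j⟫) := mul_nonneg (hnn j) (mul_self_nonneg _)
  calc h ^ 2 * (lam j * lam j * (⟪v, b j⟫ * ⟪v, b j⟫))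
      = (h ^ 2 * lam j) * (lam j * (⟪v, b j⟫ * ⟪v, b j⟫)) := by ring
    _ ≤ 4 * (lam j * (⟪v, b j⟫ * ⟪v, b j⟫)) := mul_le_mul_of_nonneg_right h1 h2

/-- For the quadratic `f(q) = f* + ½⟨q - q*, A(q - q*)⟩` with `A` nonzero
symmetric PSD, `r ≥ 2`, and step-size `h² ≤ 4/λmax(A)`, the HBr Lyapunov function
`V_k = 2(k+r-2)²h²(f(q_k) - f*) + ‖(k-1)(q_k - q_{k-1}) + (r-1)(q_k - q*)‖²
 - h²(k+r-2)⟨A(q_k - q*), (k-1)(q_k - q_{k-1}) + (r-1)(q_k - q*)⟩`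
is nonincreasing: `V_{k+1} ≤ V_k` for all `k ≥ 1`. -/
theorem stmt_13 {d : ℕ} (A : Matrix (Fin d) (Fin d) ℝ) (hA : A.PosSemidef) (hA0 : A ≠ 0)
    (fstar : ℝ) (qs : EuclideanSpace ℝ (Fin d)) (f : EuclideanSpace ℝ (Fin d) → ℝ)
    (hf : ∀ x, f x = fstar + (1 / 2) * ⟪x - qs, Matrix.toEuclideanLin A (x - qs)⟫)
    (r : ℝ) (hr : 2 ≤ r) (h : ℝ) (hh : 0 < h)
    (hstep : h ^ 2 ≤ 4 / (⨆ i, hA.isHermitian.eigenvalues i))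
    (q : ℕ → EuclideanSpace ℝ (Fin d))
    (hq : ∀ k : ℕ, 1 ≤ k →
      q (k + 1) = q k + (((k : ℝ) - 1) / ((k : ℝ) + r - 1)) • (q k - q (k - 1))
        - (h ^ 2 * (((k : ℝ) + (r - 2) / 2) / ((k : ℝ) + r - 1))) •
            Matrix.toEuclideanLin A (q k - qs))
    (V : ℕ → ℝ)
    (hV : ∀ k : ℕ, 1 ≤ k → V k =
      2 * ((k : ℝ) + r - 2) ^ 2 * h ^ 2 * (f (q k) - fstar)
        + ‖((k : ℝ) - 1) • (q k - q (k - 1)) + (r - 1) • (q k - qs)‖ ^ 2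
        - h ^ 2 * ((k : ℝ) + r - 2) *
            ⟪Matrix.toEuclideanLin A (q k - qs),
              ((k : ℝ) - 1) • (q k - q (k - 1)) + (r - 1) • (q k - qs)⟫) :
    ∀ k : ℕ, 1 ≤ k → V (k + 1) ≤ V k := by
  intro k hk
  have hsym : ∀ x y : EuclideanSpace ℝ (Fin d),
      ⟪Matrix.toEuclideanLin A x, y⟫ = ⟪x, Matrix.toEuclideanLin A y⟫ :=
    Matrix.isHermitian_iff_isSymmetric.1 hA.isHermitian
  have hk' : (1 : ℝ) ≤ (k : ℝ) := by exact_mod_cast hk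
  have hn : (k : ℝ) + r - 1 ≠ 0 := ne_of_gt (by linarith)
  have hd : q (k + 1) - q k
      = (((k : ℝ) - 1) / ((k : ℝ) + r - 1)) • (q k - q (k - 1))
        - (h ^ 2 * (((k : ℝ) + (r - 2) / 2) / ((k : ℝ) + r - 1))) •
            Matrix.toEuclideanLin A (q k - qs) := by
    rw [hq k hk]; abel
  have hs : q (k + 1) - qs = (q k - qs) + (q (k + 1) - q k) := by abel
  have E := hbr_aux (Matrix.toEuclideanLin A) hsym fstar (k : ℝ) r h
    (q k - qs) (q k - q (k - 1)) (q (k + 1) - q k) hn hd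
  have hkey := hbr_key A hA hA0 h hstep (q k - qs)
  have h1 : (0 : ℝ) ≤ ((k : ℝ) + r - 2) ^ 2 - (k : ℝ) ^ 2 := by nlinarith
  have hD : 0 ≤ (((k : ℝ) + r - 2) ^ 2 - (k : ℝ) ^ 2) / 4 *
      (h ^ 2 * (4 * ⟪q k - qs, Matrix.toEuclideanLin A (q k - qs)⟫
        - h ^ 2 * ⟪Matrix.toEuclideanLin A (q k - qs), Matrix.toEuclideanLin A (q k - qs)⟫)) :=
    mul_nonneg (div_nonneg h1 (by norm_num))
      (mul_nonneg (sq_nonneg h) (by linarith))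
  rw [hV (k + 1) (by omega), hV k hk, hf (q (k + 1)), hf (q k)]
  simp only [Nat.add_sub_cancel]
  rw [hs]
  push_cast
  linarith [E, hD]
end

section
/- Let A be a nonzero symmetric positive semidefinite d×d real matrix, f* ∈ ℝ, q* ∈ ℝᵈ, f(q) = f* + (1/2)⟨q − q*, A(q − q*)⟩, r ≥ 2, and h > 0 with h² ≤ 4/λmax(A). Then for every k ≥ 1 and all points q_k, q_{k−1} ∈ ℝᵈ, the quantity V_k := 2(k+r−2)²h²(f(q_k) − f*) + ‖(k−1)(q_k − q_{k−1}) + (r−1)(q_k − q*)‖² − h²(k+r−2)⟨A(q_k − q*), (k−1)(q_k − q_{k−1}) + (r−1)(q_k − q*)⟩ is nonnegative: V_k ≥ 0. -/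
open scoped RealInnerProductSpace

section helpers
variable {d : ℕ} {A : Matrix (Fin d) (Fin d) ℝ}

lemma aux_apply_basis (hA : A.IsHermitian) (j : Fin d) :
    Matrix.toEuclideanLin A (hA.eigenvectorBasis j) =
      hA.eigenvalues j • hA.eigenvectorBasis j := by
  apply (WithLp.equiv 2 _).injective
  ext i
  have := congrFun (hA.mulVec_eigenvectorBasis j) i
  simpa [Matrix.toEuclideanLin_apply] using this

lemma aux_inner_eq (hA : A.IsHermitian) (x y : EuclideanSpace ℝ (Fin d)) :
    ⟪Matrix.toEuclideanLin A x, y⟫ =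
      ∑ j, hA.eigenvalues j * (hA.eigenvectorBasis.repr x j) *
        (hA.eigenvectorBasis.repr y j) := by
  conv_lhs => rw [← hA.eigenvectorBasis.sum_repr x]
  rw [map_sum, sum_inner]
  refine Finset.sum_congr rfl fun j _ => ?_
  rw [map_smul, aux_apply_basis hA j, smul_smul, real_inner_smul_left,
    ← OrthonormalBasis.repr_apply_apply]
  ring

lemma aux_inner_self (hA : A.IsHermitian) (x y : EuclideanSpace ℝ (Fin d)) :
    ⟪x, y⟫ = ∑ j, (hA.eigenvectorBasis.repr x j) * (hA.eigenvectorBasis.repr y j) := by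
  rw [← hA.eigenvectorBasis.repr.inner_map_map x y]
  simp only [PiLp.inner_apply, RCLike.inner_apply, conj_trivial]
  exact Finset.sum_congr rfl fun _ _ => mul_comm _ _

end helpers

lemma aux_ptwise (mu h m a c : ℝ) (hmu : 0 ≤ mu) (hmuh : mu * h ^ 2 ≤ 4) :
    0 ≤ m ^ 2 * h ^ 2 * (mu * a * a) + c * c - h ^ 2 * m * (mu * a * c) := by
  obtain ⟨s, hs0, rfl⟩ : ∃ s, 0 ≤ s ∧ mu = s ^ 2 :=
    ⟨Real.sqrt mu, Real.sqrt_nonneg _, (Real.sq_sqrt hmu).symm⟩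
  nlinarith [sq_nonneg (s * (m * h * a) - s * (h * c / 2)),
    mul_nonneg (sq_nonneg c) (by linarith : (0:ℝ) ≤ 4 - s ^ 2 * h ^ 2)]

/-- For the quadratic `f(q) = f* + ½⟨q - q*, A(q - q*)⟩` with `A` nonzero
symmetric PSD, `r ≥ 2`, and `h² ≤ 4/λmax(A)`, for every `k ≥ 1` and all points
`q_k, q_{k-1}`, the quantity
`V_k = 2(k+r-2)²h²(f(q_k) - f*) + ‖(k-1)(q_k - q_{k-1}) + (r-1)(q_k - q*)‖²
 - h²(k+r-2)⟨A(q_k - q*), (k-1)(q_k - q_{k-1}) + (r-1)(q_k - q*)⟩`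
is nonnegative. -/
theorem stmt_14 {d : ℕ} (A : Matrix (Fin d) (Fin d) ℝ) (hA : A.PosSemidef) (hA0 : A ≠ 0)
    (fstar : ℝ) (qs : EuclideanSpace ℝ (Fin d)) (f : EuclideanSpace ℝ (Fin d) → ℝ)
    (hf : ∀ x, f x = fstar + (1 / 2) * ⟪x - qs, Matrix.toEuclideanLin A (x - qs)⟫)
    (r : ℝ) (hr : 2 ≤ r) (h : ℝ) (hh : 0 < h)
    (hstep : h ^ 2 ≤ 4 / (⨆ i, hA.isHermitian.eigenvalues i)) :
    ∀ k : ℕ, 1 ≤ k → ∀ qk qk1 : EuclideanSpace ℝ (Fin d),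
      0 ≤ 2 * ((k : ℝ) + r - 2) ^ 2 * h ^ 2 * (f qk - fstar)
        + ‖((k : ℝ) - 1) • (qk - qk1) + (r - 1) • (qk - qs)‖ ^ 2
        - h ^ 2 * ((k : ℝ) + r - 2) *
            ⟪Matrix.toEuclideanLin A (qk - qs),
              ((k : ℝ) - 1) • (qk - qk1) + (r - 1) • (qk - qs)⟫ := by
  intro k hk qk qk1
  have hH := hA.isHermitian
  set b := hH.eigenvectorBasis with hb
  set mu := hH.eigenvalues with hmudef
  set M := ⨆ i, mu i with hM
  have hmu0 : ∀ i, 0 ≤ mu i := hA.eigenvalues_nonneg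
  have hmuM : ∀ i, mu i ≤ M := fun i =>
    le_ciSup (Set.Finite.bddAbove (Set.finite_range _)) i
  have hMpos : 0 < M := by
    by_contra hcon
    push_neg at hcon
    have hall : ∀ i, mu i = 0 := fun i => le_antisymm ((hmuM i).trans hcon) (hmu0 i)
    apply hA0
    rw [hH.spectral_theorem]
    have hdiag : Matrix.diagonal (RCLike.ofReal ∘ mu) = (0 : Matrix (Fin d) (Fin d) ℝ) := by
      ext i j
      by_cases hij : i = j <;> simp [Matrix.diagonal, hij, hall]
    rw [hdiag]
    simp
  have hMh : M * h ^ 2 ≤ 4 := by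
    rw [le_div_iff₀ hMpos] at hstep
    linarith
  set u := qk - qs with hu
  set v := ((k : ℝ) - 1) • (qk - qk1) + (r - 1) • u with hv
  set m := (k : ℝ) + r - 2 with hm
  have h1 : f qk - fstar = (1 / 2) * ∑ j, mu j * (b.repr u j) * (b.repr u j) := by
    rw [hf qk, real_inner_comm, aux_inner_eq hH]
    ring
  have h2 : ‖v‖ ^ 2 = ∑ j, (b.repr v j) * (b.repr v j) := by
    rw [← real_inner_self_eq_norm_sq, aux_inner_self hH]
  have h3 : ⟪Matrix.toEuclideanLin A u, v⟫ = ∑ j, mu j * b.repr u j * b.repr v j :=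
    aux_inner_eq hH u v
  have total : 0 ≤ m ^ 2 * h ^ 2 * (∑ j, mu j * (b.repr u j) * (b.repr u j))
      + ((∑ j, (b.repr v j) * (b.repr v j))
        - h ^ 2 * m * (∑ j, mu j * b.repr u j * b.repr v j)) := by
    rw [Finset.mul_sum, Finset.mul_sum, ← Finset.sum_sub_distrib, ← Finset.sum_add_distrib]
    refine Finset.sum_nonneg fun j _ => ?_
    have := aux_ptwise (mu j) h m (b.repr u j) (b.repr v j) (hmu0 j)
      (le_trans (mul_le_mul_of_nonneg_right (hmuM j) (sq_nonneg h)) hMh)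
    linarith
  rw [h1, h2, h3]
  exact le_of_le_of_eq total (by ring)
end

section
/- Let A be a nonzero symmetric positive semidefinite d×d real matrix, let c ∈ (0,1), and let h > 0 satisfy h² ≤ 4(1−c)/λmax(A). Then for all vectors u, w ∈ ℝᵈ: ⟨u, u⟩ − c h² ⟨u, A u⟩ + ‖w‖² − 2⟨u, w⟩ + h² ⟨u, A w⟩ ≥ 0. Equivalently, the 2d×2d block matrix P̃ = [[I − c h² A, −(I − (h²/2)A)], [−(I − (h²/2)A), I]] is positive semidefinite. -/
open scoped RealInnerProductSpace
open Matrix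

/-- For a nonzero symmetric PSD matrix `A`, `c ∈ (0,1)`, and `h > 0` with
`h² ≤ 4(1-c)/λmax(A)`, for all vectors `u, w`:
`⟨u,u⟩ - ch²⟨u,Au⟩ + ‖w‖² - 2⟨u,w⟩ + h²⟨u,Aw⟩ ≥ 0`; equivalently, the block matrix
`P̃ = [[I - ch²A, -(I - (h²/2)A)], [-(I - (h²/2)A), I]]` is positive semidefinite. -/
theorem stmt_15 {d : ℕ} (A : Matrix (Fin d) (Fin d) ℝ) (hA : A.PosSemidef) (hA0 : A ≠ 0)
    (c : ℝ) (hc : c ∈ Set.Ioo (0 : ℝ) 1) (h : ℝ) (hh : 0 < h)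
    (hstep : h ^ 2 ≤ 4 * (1 - c) / (⨆ i, hA.isHermitian.eigenvalues i)) :
    (∀ u w : EuclideanSpace ℝ (Fin d),
      0 ≤ (⟪u, u⟫ : ℝ) - c * h ^ 2 * ⟪u, Matrix.toEuclideanLin A u⟫ + ‖w‖ ^ 2
        - 2 * ⟪u, w⟫ + h ^ 2 * ⟪u, Matrix.toEuclideanLin A w⟫) ∧
    (Matrix.fromBlocks (1 - (c * h ^ 2) • A) (-(1 - (h ^ 2 / 2) • A))
        (-(1 - (h ^ 2 / 2) • A)) (1 : Matrix (Fin d) (Fin d) ℝ)).PosSemidef := by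
  classical
  set ev := hA.isHermitian.eigenvalues with hev
  set L := ⨆ i, ev i with hL
  -- d ≠ 0
  rcases Nat.eq_zero_or_pos d with hd | hd
  · subst hd
    exact absurd (Subsingleton.elim A 0) hA0
  haveI : Nonempty (Fin d) := ⟨⟨0, hd⟩⟩
  have hbdd : BddAbove (Set.range ev) := Set.Finite.bddAbove (Set.finite_range ev)
  have hLpos : 0 < L := by
    rcases lt_or_ge 0 L with hl | hl
    · exact hl
    · exfalso
      apply hA0
      have hev0 : ∀ i, ev i = 0 := fun i =>
        le_antisymm ((le_ciSup hbdd i).trans hl) (hA.eigenvalues_nonneg i)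
      have hdz : Matrix.diagonal (RCLike.ofReal ∘ ev) = (0 : Matrix (Fin d) (Fin d) ℝ) := by
        ext i j
        by_cases hij : i = j <;> simp [Matrix.diagonal_apply, hij, hev0]
      rw [hA.isHermitian.spectral_theorem, hdz, map_zero]
  have hmax : ∀ i, h ^ 2 * ev i ≤ 4 * (1 - c) := fun i =>
    (mul_le_mul_of_nonneg_left (le_ciSup hbdd i) (sq_nonneg h)).trans
      ((le_div_iff₀ hLpos).mp hstep)
  -- C := (1-c)•1 - (h²/4)•A is PSD
  set U := (hA.isHermitian.eigenvectorUnitary : Matrix (Fin d) (Fin d) ℝ) with hU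
  set C : Matrix (Fin d) (Fin d) ℝ := (1 - c) • 1 - (h ^ 2 / 4) • A with hC
  have hUU : U * star U = 1 := (Matrix.mem_unitaryGroup_iff).mp hA.isHermitian.eigenvectorUnitary.2
  have hCdiag : C = U * Matrix.diagonal (fun i => (1 - c) - h ^ 2 / 4 * ev i) * star U := by
    have hd2 : Matrix.diagonal (fun i => (1 - c) - h ^ 2 / 4 * ev i)
        = (1 - c) • 1 - (h ^ 2 / 4) • Matrix.diagonal (RCLike.ofReal ∘ ev) := by
      ext i j
      by_cases hij : i = j <;> simp [Matrix.diagonal_apply, Matrix.one_apply, hij]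
    rw [hd2, Matrix.mul_sub, Matrix.sub_mul, mul_smul_comm, smul_mul_assoc, mul_one, hUU,
      mul_smul_comm, smul_mul_assoc, hC, hA.isHermitian.spectral_theorem, Unitary.conjStarAlgAut_apply]
  have hCpsd : C.PosSemidef := by
    rw [hCdiag]
    have : (Matrix.diagonal (fun i => (1 - c) - h ^ 2 / 4 * ev i)).PosSemidef :=
      Matrix.posSemidef_diagonal_iff.mpr (fun i => by have := hmax i; linarith)
    simpa [Matrix.star_eq_conjTranspose] using this.mul_mul_conjTranspose_same U
  -- D := S*C*S is PSD, and equals (1-c)•A - (h²/4)•(A*A)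
  open scoped MatrixOrder in
  obtain ⟨S, hSsa, -, hSS0⟩ := CFC.exists_sqrt_of_isSelfAdjoint_of_quasispectrumRestricts
    hA.isHermitian (QuasispectrumRestricts.nnreal_of_nonneg hA.nonneg)
  have hDpsd : (S * C * S).PosSemidef := by
    have := hCpsd.mul_mul_conjTranspose_same S
    rwa [show Sᴴ = S from hSsa] at this
  have hDeq : S * C * S = (1 - c) • A - (h ^ 2 / 4) • (A * A) := by
    have hSS : S * S = A := by simpa using hSS0
    have hSAS : S * A * S = A * A := by
      rw [← hSS]; noncomm_ring
    rw [hC, Matrix.mul_sub, Matrix.sub_mul, mul_smul_comm, smul_mul_assoc, mul_one, hSS,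
      mul_smul_comm, smul_mul_assoc, hSAS]
  -- symmetry helper
  have hAt : A.transpose = A := by
    rw [← Matrix.conjTranspose_eq_transpose_of_trivial, hA.isHermitian.eq]
  have hsym : ∀ v₁ v₂ : Fin d → ℝ, (A *ᵥ v₁) ⬝ᵥ v₂ = v₁ ⬝ᵥ (A *ᵥ v₂) := by
    intro v₁ v₂
    rw [Matrix.dotProduct_mulVec, ← Matrix.mulVec_transpose, hAt, dotProduct_comm]
  -- key scalar inequality
  have key : ∀ u w : Fin d → ℝ,
      0 ≤ u ⬝ᵥ u - c * h ^ 2 * (u ⬝ᵥ (A *ᵥ u)) + w ⬝ᵥ w - 2 * (u ⬝ᵥ w)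
        + h ^ 2 * (u ⬝ᵥ (A *ᵥ w)) := by
    intro u w
    have hDu : 0 ≤ u ⬝ᵥ ((S * C * S) *ᵥ u) := by simpa using hDpsd.dotProduct_mulVec_nonneg u
    set B : Matrix (Fin d) (Fin d) ℝ := 1 - (h ^ 2 / 2) • A with hB
    have hBu : B *ᵥ u = u - (h ^ 2 / 2) • (A *ᵥ u) := by
      rw [hB, Matrix.sub_mulVec, Matrix.one_mulVec, Matrix.smul_mulVec]
    have hsq : 0 ≤ (w - B *ᵥ u) ⬝ᵥ (w - B *ᵥ u) :=
      Finset.sum_nonneg fun i _ => mul_self_nonneg _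
    have hiden : u ⬝ᵥ u - c * h ^ 2 * (u ⬝ᵥ (A *ᵥ u)) + w ⬝ᵥ w - 2 * (u ⬝ᵥ w)
        + h ^ 2 * (u ⬝ᵥ (A *ᵥ w))
        = (w - B *ᵥ u) ⬝ᵥ (w - B *ᵥ u) + h ^ 2 * (u ⬝ᵥ ((S * C * S) *ᵥ u)) := by
      rw [hDeq, hBu]
      simp only [Matrix.sub_mulVec, Matrix.smul_mulVec, sub_dotProduct,
        dotProduct_sub, smul_dotProduct, dotProduct_smul,
        smul_eq_mul, ← Matrix.mulVec_mulVec]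
      rw [dotProduct_comm w u, dotProduct_comm w (A *ᵥ u), hsym u w, hsym u u, hsym u (A *ᵥ u)]
      ring
    rw [hiden]
    have : 0 ≤ h ^ 2 * (u ⬝ᵥ ((S * C * S) *ᵥ u)) := mul_nonneg (sq_nonneg h) hDu
    linarith
  constructor
  · intro u w
    have := key u w
    have hw : ‖w‖ ^ 2 = (⟪w, w⟫ : ℝ) := (real_inner_self_eq_norm_sq w).symm
    rw [hw]
    simpa [PiLp.inner_apply, RCLike.inner_apply, conj_trivial, dotProduct,
      Matrix.toEuclideanLin_apply, Matrix.mulVec, dotProduct, mul_comm,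
      EuclideanSpace.real_norm_sq_eq, ← pow_two] using this
  · refine Matrix.PosSemidef.of_dotProduct_mulVec_nonneg ?_ ?_
    · refine Matrix.isHermitian_fromBlocks_iff.mpr ⟨?_, ?_, ?_, Matrix.isHermitian_one⟩
      · simp [Matrix.IsHermitian, Matrix.conjTranspose_sub, Matrix.conjTranspose_smul, hAt,
          hA.isHermitian.eq]
      · simp [Matrix.conjTranspose_neg, Matrix.conjTranspose_sub, Matrix.conjTranspose_smul,
          hAt, hA.isHermitian.eq]
      · simp [Matrix.conjTranspose_neg, Matrix.conjTranspose_sub, Matrix.conjTranspose_smul,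
          hAt, hA.isHermitian.eq]
    · intro x
      have hx : star x = x := star_trivial x
      rw [hx]
      set u := x ∘ Sum.inl with hu
      set w := x ∘ Sum.inr with hw
      have hxel : x = Sum.elim u w := (Sum.elim_comp_inl_inr x).symm
      rw [hxel, Matrix.fromBlocks_mulVec, sumElim_dotProduct_sumElim]
      simp only [Sum.elim_comp_inl, Sum.elim_comp_inr]
      have expand : u ⬝ᵥ ((1 - (c * h ^ 2) • A) *ᵥ u + (-(1 - (h ^ 2 / 2) • A)) *ᵥ w)
          + w ⬝ᵥ ((-(1 - (h ^ 2 / 2) • A)) *ᵥ u + (1 : Matrix (Fin d) (Fin d) ℝ) *ᵥ w)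
          = u ⬝ᵥ u - c * h ^ 2 * (u ⬝ᵥ (A *ᵥ u)) + w ⬝ᵥ w - 2 * (u ⬝ᵥ w)
            + h ^ 2 * (u ⬝ᵥ (A *ᵥ w)) := by
        simp only [Matrix.neg_mulVec, Matrix.sub_mulVec, Matrix.one_mulVec,
          Matrix.smul_mulVec, dotProduct_add, dotProduct_neg,
          dotProduct_sub, dotProduct_smul, smul_eq_mul]
        rw [dotProduct_comm w u, dotProduct_comm w (A *ᵥ u), hsym u w]
        ring
      rw [expand]
      exact key u w
end

section
/- Let A be a nonzero symmetric positive semidefinite d×d real matrix, f* ∈ ℝ, q* ∈ ℝᵈ, f(q) = f* + (1/2)⟨q − q*, A(q − q*)⟩, r ≥ 2, c ∈ (0,1), and h > 0 with h² ≤ 4(1−c)/λmax(A). Let q : ℕ → ℝᵈ satisfy the HBr recursion q_{k+1} = q_k + ((k−1)/(k+r−1))(q_k − q_{k−1}) − h²((k + (r−2)/2)/(k+r−1)) A(q_k − q*) for all k ≥ 1, and define V_k := 2(k+r−2)²h²(f(q_k) − f*) + ‖(k−1)(q_k − q_{k−1}) + (r−1)(q_k − q*)‖² − h²(k+r−2)⟨A(q_k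 − q*), (k−1)(q_k − q_{k−1}) + (r−1)(q_k − q*)⟩. Then for all k ≥ 1: f(q_k) − f* ≤ V_1 / (2 c h² (k+r−2)²); in particular HBr converges at the accelerated rate O(1/k²). -/
open scoped RealInnerProductSpace

/-- Rayleigh quotient bound for a hermitian matrix. -/
lemma hb_rayleigh {d : ℕ} (A : Matrix (Fin d) (Fin d) ℝ) (hA : A.IsHermitian)
    (v : EuclideanSpace ℝ (Fin d)) :
    ⟪v, Matrix.toEuclideanLin A v⟫ ≤ (⨆ i, hA.eigenvalues i) * ‖v‖ ^ 2 := by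
  set T := Matrix.toEuclideanLin A with hT
  set b := hA.eigenvectorBasis with hb
  set L := ⨆ i, hA.eigenvalues i with hL
  have hsym : ∀ x y : EuclideanSpace ℝ (Fin d), ⟪T x, y⟫ = ⟪x, T y⟫ :=
    Matrix.isHermitian_iff_isSymmetric.mp hA
  have hTb : ∀ i, T (b i) = hA.eigenvalues i • b i := by
    intro i
    have h1 := hA.mulVec_eigenvectorBasis i
    apply (WithLp.equiv 2 _).injective
    ext j
    simpa [hT, hb, Matrix.toEuclideanLin_apply] using congrFun h1 j
  have hle : ∀ i, hA.eigenvalues i ≤ L :=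
    fun i => le_ciSup (Set.finite_range _).bddAbove i
  have hpars := b.sum_inner_mul_inner v v
  have hexp := b.sum_inner_mul_inner v (T v)
  calc ⟪v, T v⟫ = ∑ i, ⟪v, b i⟫ * ⟪b i, T v⟫ := hexp.symm
    _ = ∑ i, hA.eigenvalues i * (⟪v, b i⟫ * ⟪b i, v⟫) := by
        refine Finset.sum_congr rfl fun i _ => ?_
        rw [← hsym (b i) v, hTb i, real_inner_smul_left]; ring
    _ ≤ ∑ i, L * (⟪v, b i⟫ * ⟪b i, v⟫) := by
        refine Finset.sum_le_sum fun i _ => ?_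
        have : 0 ≤ ⟪v, b i⟫ * ⟪b i, v⟫ := by
          rw [real_inner_comm (b i) v]; exact mul_self_nonneg _
        exact mul_le_mul_of_nonneg_right (hle i) this
    _ = L * ⟪v, v⟫ := by rw [← Finset.mul_sum, hpars]
    _ = L * ‖v‖ ^ 2 := by rw [real_inner_self_eq_norm_sq]

/-- The exact one-step change of the HBr Lyapunov function. -/
lemma hb_delta {E : Type*} [NormedAddCommGroup E] [InnerProductSpace ℝ E]
    (T : E →ₗ[ℝ] E) (hsym : ∀ x y : E, ⟪T x, y⟫ = ⟪x, T y⟫)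
    (K r h : ℝ) (X P : E) :
    h ^ 2 * ⟪K • X + P - (h ^ 2 * (K + (r - 2) / 2)) • T X,
        T (K • X + P - (h ^ 2 * (K + (r - 2) / 2)) • T X)⟫
      + ‖P - (h ^ 2 * (K + (r - 2) / 2)) • T X‖ ^ 2
      - h ^ 2 * ⟪T (K • X + P - (h ^ 2 * (K + (r - 2) / 2)) • T X),
          P - (h ^ 2 * (K + (r - 2) / 2)) • T X⟫
    = (h ^ 2 * (K + r - 2) ^ 2 * ⟪X, T X⟫ + ‖P‖ ^ 2 - h ^ 2 * (K + r - 2) * ⟪T X, P⟫)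
      + (h ^ 2 * (K + (r - 2) / 2) * (r - 2) / 2)
          * (h ^ 2 * ⟪T X, T X⟫ - 4 * ⟪X, T X⟫) := by
  have eq1 : ⟪X, T P⟫ = ⟪P, T X⟫ := by rw [← hsym X P, real_inner_comm]
  have eq2 : ⟪X, T (T P)⟫ = ⟪P, T (T X)⟫ := by
    rw [← hsym X (T P), real_inner_comm, hsym P (T X)]
  simp only [map_add, map_sub, map_smul, inner_add_left, inner_add_right, inner_sub_left,
    inner_sub_right, real_inner_smul_left, real_inner_smul_right,
    ← real_inner_self_eq_norm_sq, hsym, eq1, eq2]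
  ring

set_option maxHeartbeats 2000000 in
/-- For the quadratic `f(q) = f* + ½⟨q - q*, A(q - q*)⟩` with `A` nonzero
symmetric PSD, `r ≥ 2`, `c ∈ (0,1)`, and `h² ≤ 4(1-c)/λmax(A)`, along the HBr iterates
the suboptimality satisfies the accelerated `O(1/k²)` bound
`f(q_k) - f* ≤ V_1 / (2 c h² (k+r-2)²)` for all `k ≥ 1`, where `V` is the HBr Lyapunov
function. -/
theorem stmt_16 {d : ℕ} (A : Matrix (Fin d) (Fin d) ℝ) (hA : A.PosSemidef) (hA0 : A ≠ 0)
    (fstar : ℝ) (qs : EuclideanSpace ℝ (Fin d)) (f : EuclideanSpace ℝ (Fin d) → ℝ)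
    (hf : ∀ x, f x = fstar + (1 / 2) * ⟪x - qs, Matrix.toEuclideanLin A (x - qs)⟫)
    (r : ℝ) (hr : 2 ≤ r) (c : ℝ) (hc : c ∈ Set.Ioo (0 : ℝ) 1) (h : ℝ) (hh : 0 < h)
    (hstep : h ^ 2 ≤ 4 * (1 - c) / (⨆ i, hA.isHermitian.eigenvalues i))
    (q : ℕ → EuclideanSpace ℝ (Fin d))
    (hq : ∀ k : ℕ, 1 ≤ k →
      q (k + 1) = q k + (((k : ℝ) - 1) / ((k : ℝ) + r - 1)) • (q k - q (k - 1))
        - (h ^ 2 * (((k : ℝ) + (r - 2) / 2) / ((k : ℝ) + r - 1))) •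
            Matrix.toEuclideanLin A (q k - qs))
    (V : ℕ → ℝ)
    (hV : ∀ k : ℕ, 1 ≤ k → V k =
      2 * ((k : ℝ) + r - 2) ^ 2 * h ^ 2 * (f (q k) - fstar)
        + ‖((k : ℝ) - 1) • (q k - q (k - 1)) + (r - 1) • (q k - qs)‖ ^ 2
        - h ^ 2 * ((k : ℝ) + r - 2) *
            ⟪Matrix.toEuclideanLin A (q k - qs),
              ((k : ℝ) - 1) • (q k - q (k - 1)) + (r - 1) • (q k - qs)⟫) :
    ∀ k : ℕ, 1 ≤ k →
      f (q k) - fstar ≤ V 1 / (2 * c * h ^ 2 * ((k : ℝ) + r - 2) ^ 2) := by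
  obtain ⟨hc0, hc1⟩ := hc
  set T : EuclideanSpace ℝ (Fin d) →ₗ[ℝ] EuclideanSpace ℝ (Fin d) :=
    Matrix.toEuclideanLin A with hTdef
  set L : ℝ := ⨆ i, hA.isHermitian.eigenvalues i with hLdef
  have hsym : ∀ x y : EuclideanSpace ℝ (Fin d), ⟪T x, y⟫ = ⟪x, T y⟫ :=
    Matrix.isHermitian_iff_isSymmetric.mp hA.isHermitian
  have hRay : ∀ v, ⟪v, T v⟫ ≤ L * ‖v‖ ^ 2 := fun v => hb_rayleigh A hA.isHermitian v
  -- L > 0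
  have hnn : ∀ i, 0 ≤ hA.isHermitian.eigenvalues i := hA.eigenvalues_nonneg
  have hle : ∀ i, hA.isHermitian.eigenvalues i ≤ L :=
    fun i => le_ciSup (Set.finite_range _).bddAbove i
  have hev_ne : hA.isHermitian.eigenvalues ≠ 0 := by
    intro hz
    apply hA0
    have hsp := hA.isHermitian.spectral_theorem
    rwa [hz, Pi.comp_zero, RCLike.ofReal_zero,
      (by rfl : Function.const (Fin d) (0 : ℝ) = fun _ => 0),
      Matrix.diagonal_zero, map_zero] at hsp
  have hL0 : 0 < L := by
    obtain ⟨i, hi⟩ := Function.ne_iff.mp hev_ne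
    exact lt_of_lt_of_le ((hnn i).lt_of_ne (Ne.symm hi)) (hle i)
  have hLh : h ^ 2 * L ≤ 4 * (1 - c) := (le_div_iff₀ hL0).mp hstep
  -- square root
  set TS : EuclideanSpace ℝ (Fin d) →ₗ[ℝ] EuclideanSpace ℝ (Fin d) :=
    Matrix.toEuclideanLin (open scoped MatrixOrder in CFC.sqrt A) with hTSdef
  have hsymS : ∀ x y : EuclideanSpace ℝ (Fin d), ⟪TS x, y⟫ = ⟪x, TS y⟫ :=
    Matrix.isHermitian_iff_isSymmetric.mp
      (open scoped MatrixOrder in (Matrix.LE.le.posSemidef (CFC.sqrt_nonneg A)).isHermitian)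
  have hTS : ∀ v, T v = TS (TS v) := by
    intro v
    rw [hTdef, hTSdef]
    open scoped MatrixOrder in conv_lhs => rw [← CFC.sqrt_mul_sqrt_self A hA.nonneg]
    ext j
    simp [Matrix.toEuclideanLin_apply, Matrix.mulVec_mulVec]
  have hpos : ∀ v, 0 ≤ ⟪v, T v⟫ := by
    intro v
    rw [hTS v, ← hsymS]
    exact real_inner_self_nonneg
  -- key1 : h² ‖Tv‖² ≤ 4 ⟪v, Tv⟫
  have key1 : ∀ v, h ^ 2 * ⟪T v, T v⟫ ≤ 4 * ⟪v, T v⟫ := by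
    intro v
    have e1 : ⟪T v, T v⟫ = ⟪TS v, T (TS v)⟫ := by
      conv_lhs => rw [hTS v]
      rw [hsymS, ← hTS]
    have e2 : ⟪TS v, T (TS v)⟫ ≤ L * ‖TS v‖ ^ 2 := hRay (TS v)
    have e3 : ‖TS v‖ ^ 2 = ⟪v, T v⟫ := by
      rw [← real_inner_self_eq_norm_sq, hsymS, ← hTS]
    have e4 : ⟪T v, T v⟫ ≤ L * ⟪v, T v⟫ := by rw [e1, ← e3]; exact e2
    have h2nn : (0:ℝ) ≤ h ^ 2 := sq_nonneg h
    nlinarith [hpos v, mul_le_mul_of_nonneg_left e4 h2nn,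
      mul_le_mul_of_nonneg_right hLh (hpos v)]
  clear_value T TS L
  -- positions and momenta
  set X : ℕ → EuclideanSpace ℝ (Fin d) := fun k => q k - qs with hX
  set P : ℕ → EuclideanSpace ℝ (Fin d) :=
    fun k => ((k : ℝ) - 1) • (q k - q (k - 1)) + (r - 1) • (q k - qs) with hP
  clear_value X P
  -- canonical form of V
  have Vform : ∀ k : ℕ, 1 ≤ k → V k =
      h ^ 2 * ((k : ℝ) + r - 2) ^ 2 * ⟪X k, T (X k)⟫ + ‖P k‖ ^ 2
        - h ^ 2 * ((k : ℝ) + r - 2) * ⟪T (X k), P k⟫ := by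
    intro k hk
    rw [hV k hk, hf (q k)]
    simp only [hX, hP]
    ring
  -- recursion
  have hPB : ∀ k : ℕ, 1 ≤ k →
      ((k : ℝ) + r - 1) • X (k + 1)
        = (k : ℝ) • X k + P k - (h ^ 2 * ((k : ℝ) + (r - 2) / 2)) • T (X k) := by
    intro k hk
    have hs : ((k : ℝ) + r - 1) ≠ 0 := by
      have : (1:ℝ) ≤ (k:ℝ) := by exact_mod_cast hk
      nlinarith
    simp only [hX, hP]
    rw [hq k hk]
    match_scalars <;> field_simp <;> ring
  have hPA : ∀ k : ℕ, 1 ≤ k →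
      P (k + 1) = P k - (h ^ 2 * ((k : ℝ) + (r - 2) / 2)) • T (X k) := by
    intro k hk
    have hstep1 : P (k + 1) = ((k : ℝ) + r - 1) • X (k + 1) - (k : ℝ) • X k := by
      simp only [hX, hP, Nat.add_sub_cancel, Nat.cast_add, Nat.cast_one]
      match_scalars <;> ring
    rw [hstep1, hPB k hk]
    abel
  -- monotonicity
  have Vmono : ∀ k : ℕ, 1 ≤ k → V (k + 1) ≤ V k := by
    intro k hk
    have hK1 : (1:ℝ) ≤ (k:ℝ) := by exact_mod_cast hk
    have key := hb_delta T hsym (k : ℝ) r h (X k) (P k)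
    rw [← hPB k hk, ← hPA k hk] at key
    simp only [map_smul, real_inner_smul_left, real_inner_smul_right] at key
    have hΔ : (h ^ 2 * ((k : ℝ) + (r - 2) / 2) * (r - 2) / 2)
        * (h ^ 2 * ⟪T (X k), T (X k)⟫ - 4 * ⟪X k, T (X k)⟫) ≤ 0 := by
      have c1 : 0 ≤ h ^ 2 * ((k : ℝ) + (r - 2) / 2) * (r - 2) / 2 := by
        apply div_nonneg _ (by norm_num)
        exact mul_nonneg (mul_nonneg (sq_nonneg h) (by linarith)) (by linarith)
      have c2 : h ^ 2 * ⟪T (X k), T (X k)⟫ - 4 * ⟪X k, T (X k)⟫ ≤ 0 := by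
        linarith [key1 (X k)]
      exact mul_nonpos_of_nonneg_of_nonpos c1 c2
    rw [Vform (k+1) (Nat.le_succ_of_le hk), Vform k hk]
    push_cast
    ring_nf
    ring_nf at key
    linarith [key, hΔ]
  -- lower bound for V
  have Vlow : ∀ k : ℕ, 1 ≤ k →
      c * h ^ 2 * ((k : ℝ) + r - 2) ^ 2 * ⟪X k, T (X k)⟫ ≤ V k := by
    intro k hk
    have hK1 : (1:ℝ) ≤ (k:ℝ) := by exact_mod_cast hk
    have ht1 : (1:ℝ) ≤ (k:ℝ) + r - 2 := by linarith
    set t : ℝ := (k : ℝ) + r - 2 with htdef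
    set α : EuclideanSpace ℝ (Fin d) := TS (X k) with hα
    set β : EuclideanSpace ℝ (Fin d) := TS (P k) with hβ
    clear_value t α β
    have e1 : ⟪T (X k), P k⟫ = ⟪α, β⟫ := by
      rw [hα, hβ, hTS (X k), hsymS]
    have e2 : ⟪X k, T (X k)⟫ = ‖α‖ ^ 2 := by
      rw [hα, hTS (X k), ← hsymS, real_inner_self_eq_norm_sq]
    have e3 : ‖β‖ ^ 2 ≤ L * ‖P k‖ ^ 2 := by
      have e3' : ‖β‖ ^ 2 = ⟪P k, T (P k)⟫ := by
        rw [hβ, hTS (P k), ← hsymS, real_inner_self_eq_norm_sq]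
      rw [e3']; exact hRay (P k)
    have hcs : ⟪α, β⟫ ≤ ‖α‖ * ‖β‖ := real_inner_le_norm α β
    rw [Vform k hk, e1, e2, ← htdef]
    have h4c : (0:ℝ) < 4 * (1 - c) := by linarith
    have hmain : h ^ 2 * t * ⟪α, β⟫ ≤ (1 - c) * h ^ 2 * t ^ 2 * ‖α‖ ^ 2 + ‖P k‖ ^ 2 := by
      have hsq : 0 ≤ h ^ 2 * (2 * (1 - c) * t * ‖α‖ - ‖β‖) ^ 2 :=
        mul_nonneg (sq_nonneg h) (sq_nonneg _)
      have hb2 : h ^ 2 * ‖β‖ ^ 2 ≤ 4 * (1 - c) * ‖P k‖ ^ 2 := by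
        have g1 : h ^ 2 * ‖β‖ ^ 2 ≤ h ^ 2 * L * ‖P k‖ ^ 2 := by
          rw [mul_assoc]
          exact mul_le_mul_of_nonneg_left e3 (sq_nonneg h)
        have g2 : h ^ 2 * L * ‖P k‖ ^ 2 ≤ 4 * (1 - c) * ‖P k‖ ^ 2 :=
          mul_le_mul_of_nonneg_right hLh (sq_nonneg _)
        linarith
      have hip : h ^ 2 * t * ⟪α, β⟫ ≤ h ^ 2 * t * (‖α‖ * ‖β‖) := by
        have h2t : (0:ℝ) ≤ h ^ 2 * t :=
          mul_nonneg (sq_nonneg h) (by rw [htdef]; linarith)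
        exact mul_le_mul_of_nonneg_left hcs h2t
      have hfin : (4 * (1 - c)) * (h ^ 2 * t * ⟪α, β⟫)
          ≤ (4 * (1 - c)) * ((1 - c) * h ^ 2 * t ^ 2 * ‖α‖ ^ 2 + ‖P k‖ ^ 2) := by
        nlinarith [hip, hsq, hb2, h4c]
      exact le_of_mul_le_mul_left hfin h4c
    linarith [hmain]
  -- V k ≤ V 1
  have Vle1 : ∀ k : ℕ, 1 ≤ k → V k ≤ V 1 := by
    intro k hk
    induction k with
    | zero => omega
    | succ n ih =>
      rcases Nat.eq_or_lt_of_le hk with he | hlt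
      · rw [← he]
      · have hn : 1 ≤ n := by omega
        exact (Vmono n hn).trans (ih hn)
  -- conclusion
  intro k hk
  have hK1 : (1:ℝ) ≤ (k:ℝ) := by exact_mod_cast hk
  have ht : (0:ℝ) < (k:ℝ) + r - 2 := by linarith
  have hden : (0:ℝ) < 2 * c * h ^ 2 * ((k : ℝ) + r - 2) ^ 2 := by positivity
  rw [le_div_iff₀ hden]
  have hfk : f (q k) - fstar = 1 / 2 * ⟪X k, T (X k)⟫ := by
    rw [hf (q k)]; simp only [hX]; ring
  rw [hfk]
  have l1 := Vlow k hk
  have l2 := Vle1 k hk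
  nlinarith [l1, l2]
end

section
/- Let A be a nonzero symmetric positive semidefinite d×d real matrix, f* ∈ ℝ, q* ∈ ℝᵈ, f(q) = f* + (1/2)⟨q − q*, A(q − q*)⟩, r ≥ 2, and h > 0 with h² = 2/λmax(A). Let q : ℕ → ℝᵈ satisfy the HBr recursion q_{k+1} = q_k + ((k−1)/(k+r−1))(q_k − q_{k−1}) − h²((k + (r−2)/2)/(k+r−1)) A(q_k − q*) for all k ≥ 1, and define V_k := 2(k+r−2)²h²(f(q_k) − f*) + ‖(k−1)(q_k − q_{k−1}) + (r−1)(q_k − q*)‖² − h²(k+r−2)⟨A(q_k − q*), (k−1)(q_k − q_{k−1}) + (r−1)(q_k − q*)⟩. Then for all k ≥ 1: f(q_k) − f* ≤ λmax(A) · V_1 / (2(k+r−2)²). -/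
open scoped RealInnerProductSpace

section aux1

variable {E : Type*} [NormedAddCommGroup E] [InnerProductSpace ℝ E]

lemma hb17_expand2 (T : E →ₗ[ℝ] E) (c : ℝ) (x p : E) :
    ⟪p - c • T x, p - c • T x⟫ = ⟪p,p⟫ - 2*c*⟪T x,p⟫ + c^2*⟪T x,T x⟫ := by
  have e1 : ⟪p, T x⟫ = ⟪T x, p⟫ := real_inner_comm _ _
  simp only [inner_sub_left, inner_sub_right, real_inner_smul_left, real_inner_smul_right, e1]
  ring

lemma hb17_expand (T : E →ₗ[ℝ] E) (hsym : ∀ a b : E, ⟪T a, b⟫ = ⟪a, T b⟫)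
    (t c k : ℝ) (x p : E) :
    t * ⟪k•x + p - c • T x, T (k•x + p - c • T x)⟫
      + ⟪p - c • T x, p - c • T x⟫
      - t * ⟪T (k•x + p - c • T x), p - c • T x⟫
    = ⟪p,p⟫ + t*k^2*⟪x,T x⟫ + (t*k - 2*c)*⟪T x, p⟫ + (c^2 - t*c*k)*⟪T x, T x⟫ := by
  have e1 : ⟪x, T p⟫ = ⟪T x, p⟫ := (hsym x p).symm
  have e2 : ⟪p, T x⟫ = ⟪T x, p⟫ := real_inner_comm _ _
  have e3 : ⟪x, T (T x)⟫ = ⟪T x, T x⟫ := (hsym x (T x)).symm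
  have e4 : ⟪p, T (T x)⟫ = ⟪T p, T x⟫ := ((hsym (T x) p).symm.trans (real_inner_comm _ _)).symm.trans (real_inner_comm _ _)
  have e5 : ⟪T x, T p⟫ = ⟪T p, T x⟫ := real_inner_comm _ _
  have e6 : ⟪T (T x), x⟫ = ⟪T x, T x⟫ := hsym (T x) x
  have e7 : ⟪T (T x), p⟫ = ⟪T x, T p⟫ := hsym (T x) p
  have e8 : ⟪T (T x), T x⟫ = ⟪T x, T (T x)⟫ := real_inner_comm _ _
  have e10 : ⟪T p, p⟫ = ⟪p, T p⟫ := real_inner_comm _ _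
  have e9 : ⟪T p, x⟫ = ⟪T x, p⟫ := (hsym p x).trans (real_inner_comm _ _)
  simp only [map_add, map_sub, map_smul, inner_add_left, inner_add_right,
    inner_sub_left, inner_sub_right, real_inner_smul_left, real_inner_smul_right,
    smul_eq_mul, e1, e3, e4, e6, e7, e9, e2, e5, e8, e10]
  ring

end aux1

section aux3

variable {d : ℕ}

lemma hb17_sym (A : Matrix (Fin d) (Fin d) ℝ) (hA : A.IsHermitian)
    (a b : EuclideanSpace ℝ (Fin d)) :
    ⟪Matrix.toEuclideanLin A a, b⟫ = ⟪a, Matrix.toEuclideanLin A b⟫ :=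
  (Matrix.isHermitian_iff_isSymmetric.mp hA) a b

lemma hb17_apply_basis (A : Matrix (Fin d) (Fin d) ℝ) (hA : A.IsHermitian) (i : Fin d) :
    Matrix.toEuclideanLin A (hA.eigenvectorBasis i) = hA.eigenvalues i • hA.eigenvectorBasis i := by
  apply (WithLp.equiv 2 _).injective
  simp only [Matrix.toEuclideanLin_apply]
  simpa using hA.mulVec_eigenvectorBasis i

lemma hb17_inner_eq (A : Matrix (Fin d) (Fin d) ℝ) (hA : A.IsHermitian)
    (z : EuclideanSpace ℝ (Fin d)) :
    ⟪z, Matrix.toEuclideanLin A z⟫ = ∑ i, hA.eigenvalues i * ⟪hA.eigenvectorBasis i, z⟫^2 := by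
  rw [← (hA.eigenvectorBasis).sum_inner_mul_inner z (Matrix.toEuclideanLin A z)]
  congr 1; funext i
  rw [← hb17_sym A hA, hb17_apply_basis A hA i, real_inner_smul_left, real_inner_comm z]
  ring

lemma hb17_inner_sq (A : Matrix (Fin d) (Fin d) ℝ) (hA : A.IsHermitian)
    (z : EuclideanSpace ℝ (Fin d)) :
    ⟪Matrix.toEuclideanLin A z, Matrix.toEuclideanLin A z⟫
      = ∑ i, (hA.eigenvalues i)^2 * ⟪hA.eigenvectorBasis i, z⟫^2 := by
  rw [← (hA.eigenvectorBasis).sum_inner_mul_inner]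
  congr 1; funext i
  have hb1 : ⟪Matrix.toEuclideanLin A z, hA.eigenvectorBasis i⟫
      = hA.eigenvalues i * ⟪hA.eigenvectorBasis i, z⟫ := by
    rw [real_inner_comm, ← hb17_sym A hA, hb17_apply_basis A hA i, real_inner_smul_left]
  have hb2 : ⟪hA.eigenvectorBasis i, Matrix.toEuclideanLin A z⟫
      = hA.eigenvalues i * ⟪hA.eigenvectorBasis i, z⟫ := by
    rw [← hb17_sym A hA, hb17_apply_basis A hA i, real_inner_smul_left]
  rw [hb1, hb2]; ring

lemma hb17_psd (A : Matrix (Fin d) (Fin d) ℝ) (hA : A.PosSemidef)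
    (z : EuclideanSpace ℝ (Fin d)) : 0 ≤ ⟪z, Matrix.toEuclideanLin A z⟫ := by
  rw [hb17_inner_eq A hA.isHermitian]
  exact Finset.sum_nonneg fun i _ => mul_nonneg (hA.eigenvalues_nonneg i) (sq_nonneg _)

lemma hb17_lam_pos (A : Matrix (Fin d) (Fin d) ℝ) (hA : A.PosSemidef) (hA0 : A ≠ 0) :
    0 < ⨆ i, hA.isHermitian.eigenvalues i := by
  rcases Nat.eq_zero_or_pos d with hd | hd
  · exfalso; apply hA0; subst hd; exact Subsingleton.elim _ _
  have : Nonempty (Fin d) := ⟨⟨0, hd⟩⟩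
  have hne : ∃ i, hA.isHermitian.eigenvalues i ≠ 0 := by
    by_contra hc
    push_neg at hc
    apply hA0
    have := hA.isHermitian.spectral_theorem
    rw [this]
    have : Matrix.diagonal (RCLike.ofReal ∘ hA.isHermitian.eigenvalues) = (0 : Matrix (Fin d) (Fin d) ℝ) := by
      ext i j
      by_cases hij : i = j <;> simp [Matrix.diagonal, hij, hc]
    rw [this, map_zero]
  obtain ⟨i, hi⟩ := hne
  have hpos : 0 < hA.isHermitian.eigenvalues i := lt_of_le_of_ne (hA.eigenvalues_nonneg i) (Ne.symm hi)
  exact lt_of_lt_of_le hpos (le_ciSup (Finite.bddAbove_range _) i)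

lemma hb17_bound (A : Matrix (Fin d) (Fin d) ℝ) (hA : A.PosSemidef)
    (z : EuclideanSpace ℝ (Fin d)) :
    ⟪Matrix.toEuclideanLin A z, Matrix.toEuclideanLin A z⟫
      ≤ (⨆ i, hA.isHermitian.eigenvalues i) * ⟪z, Matrix.toEuclideanLin A z⟫ := by
  rcases Nat.eq_zero_or_pos d with hd | hd
  · subst hd
    simp [hb17_inner_sq A hA.isHermitian, hb17_inner_eq A hA.isHermitian]
    ext i; exact i.elim0
  have : Nonempty (Fin d) := ⟨⟨0, hd⟩⟩
  rw [hb17_inner_sq A hA.isHermitian, hb17_inner_eq A hA.isHermitian, Finset.mul_sum]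
  apply Finset.sum_le_sum
  intro i _
  have h1 : 0 ≤ hA.isHermitian.eigenvalues i := hA.eigenvalues_nonneg i
  have h2 : hA.isHermitian.eigenvalues i ≤ ⨆ j, hA.isHermitian.eigenvalues j :=
    le_ciSup (Finite.bddAbove_range _) i
  have hc : (0:ℝ) ≤ ⟪hA.isHermitian.eigenvectorBasis i, z⟫^2 := sq_nonneg _
  have h3 : hA.isHermitian.eigenvalues i ^ 2
      ≤ (⨆ j, hA.isHermitian.eigenvalues j) * hA.isHermitian.eigenvalues i := by nlinarith
  calc hA.isHermitian.eigenvalues i ^ 2 * ⟪hA.isHermitian.eigenvectorBasis i, z⟫^2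
      ≤ ((⨆ j, hA.isHermitian.eigenvalues j) * hA.isHermitian.eigenvalues i)
          * ⟪hA.isHermitian.eigenvectorBasis i, z⟫^2 := mul_le_mul_of_nonneg_right h3 hc
    _ = (⨆ j, hA.isHermitian.eigenvalues j)
          * (hA.isHermitian.eigenvalues i * ⟪hA.isHermitian.eigenvectorBasis i, z⟫^2) := by ring

end aux3

/-- For the quadratic `f(q) = f* + ½⟨q - q*, A(q - q*)⟩` with `A` nonzero
symmetric PSD, `r ≥ 2`, and step-size `h² = 2/λmax(A)`, along the HBr iterates
`f(q_k) - f* ≤ λmax(A)·V_1 / (2(k+r-2)²)` for all `k ≥ 1`, where `V` is the HBr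
Lyapunov function. -/
theorem stmt_17 {d : ℕ} (A : Matrix (Fin d) (Fin d) ℝ) (hA : A.PosSemidef) (hA0 : A ≠ 0)
    (fstar : ℝ) (qs : EuclideanSpace ℝ (Fin d)) (f : EuclideanSpace ℝ (Fin d) → ℝ)
    (hf : ∀ x, f x = fstar + (1 / 2) * ⟪x - qs, Matrix.toEuclideanLin A (x - qs)⟫)
    (r : ℝ) (hr : 2 ≤ r) (h : ℝ) (hh : 0 < h)
    (hstep : h ^ 2 = 2 / (⨆ i, hA.isHermitian.eigenvalues i))
    (q : ℕ → EuclideanSpace ℝ (Fin d))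
    (hq : ∀ k : ℕ, 1 ≤ k →
      q (k + 1) = q k + (((k : ℝ) - 1) / ((k : ℝ) + r - 1)) • (q k - q (k - 1))
        - (h ^ 2 * (((k : ℝ) + (r - 2) / 2) / ((k : ℝ) + r - 1))) •
            Matrix.toEuclideanLin A (q k - qs))
    (V : ℕ → ℝ)
    (hV : ∀ k : ℕ, 1 ≤ k → V k =
      2 * ((k : ℝ) + r - 2) ^ 2 * h ^ 2 * (f (q k) - fstar)
        + ‖((k : ℝ) - 1) • (q k - q (k - 1)) + (r - 1) • (q k - qs)‖ ^ 2
        - h ^ 2 * ((k : ℝ) + r - 2) *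
            ⟪Matrix.toEuclideanLin A (q k - qs),
              ((k : ℝ) - 1) • (q k - q (k - 1)) + (r - 1) • (q k - qs)⟫) :
    ∀ k : ℕ, 1 ≤ k →
      f (q k) - fstar ≤
        (⨆ i, hA.isHermitian.eigenvalues i) * V 1 / (2 * ((k : ℝ) + r - 2) ^ 2) := by
  set lam := ⨆ i, hA.isHermitian.eigenvalues i with hlamdef
  have hlam : 0 < lam := hb17_lam_pos A hA hA0
  set T : EuclideanSpace ℝ (Fin d) →ₗ[ℝ] EuclideanSpace ℝ (Fin d) := Matrix.toEuclideanLin A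
    with hTdef
  have hsym : ∀ a b : EuclideanSpace ℝ (Fin d), ⟪T a, b⟫ = ⟪a, T b⟫ :=
    hb17_sym A hA.isHermitian
  have hpsd : ∀ z, 0 ≤ ⟪z, T z⟫ := hb17_psd A hA
  have hbd : ∀ z, ⟪T z, T z⟫ ≤ lam * ⟪z, T z⟫ := hb17_bound A hA
  set t := h ^ 2 with htdef
  have ht0 : 0 < t := by positivity
  have htlam : t * lam = 2 := by rw [hstep]; field_simp
  have ht : t = 2 / lam := hstep
  have htb : ∀ z : EuclideanSpace ℝ (Fin d), t ^ 2 * ⟪T z, T z⟫ ≤ 2 * t * ⟪z, T z⟫ := by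
    intro z
    have h1 := hbd z
    have h2 : t ^ 2 * ⟪T z, T z⟫ ≤ t ^ 2 * (lam * ⟪z, T z⟫) :=
      mul_le_mul_of_nonneg_left h1 (by positivity)
    calc t ^ 2 * ⟪T z, T z⟫ ≤ t ^ 2 * (lam * ⟪z, T z⟫) := h2
      _ = (t * lam) * (t * ⟪z, T z⟫) := by ring
      _ = 2 * t * ⟪z, T z⟫ := by rw [htlam]; ring
  -- scalar form of V
  have hVform : ∀ n : ℕ, 1 ≤ n → V n =
      t * ((n : ℝ) + r - 2) ^ 2 * ⟪q n - qs, T (q n - qs)⟫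
      + ⟪((n : ℝ) - 1) • (q n - q (n - 1)) + (r - 1) • (q n - qs),
          ((n : ℝ) - 1) • (q n - q (n - 1)) + (r - 1) • (q n - qs)⟫
      - t * ((n : ℝ) + r - 2) *
          ⟪T (q n - qs), ((n : ℝ) - 1) • (q n - q (n - 1)) + (r - 1) • (q n - qs)⟫ := by
    intro n hn
    rw [hV n hn, hf (q n), ← real_inner_self_eq_norm_sq]
    ring
  have hVform2 : ∀ n : ℕ, 1 ≤ n → V n =
      t * ⟪((n : ℝ) + r - 2) • (q n - qs), T (((n : ℝ) + r - 2) • (q n - qs))⟫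
      + ⟪((n : ℝ) - 1) • (q n - q (n - 1)) + (r - 1) • (q n - qs),
          ((n : ℝ) - 1) • (q n - q (n - 1)) + (r - 1) • (q n - qs)⟫
      - t * ⟪T (((n : ℝ) + r - 2) • (q n - qs)),
          ((n : ℝ) - 1) • (q n - q (n - 1)) + (r - 1) • (q n - qs)⟫ := by
    intro n hn
    rw [hVform n hn]
    simp only [map_smul, real_inner_smul_left, real_inner_smul_right]
    ring
  -- one-step decrease
  have hdec : ∀ n : ℕ, 1 ≤ n → V (n + 1) ≤ V n := by
    intro n hn
    have hn1 : (1 : ℝ) ≤ (n : ℝ) := by exact_mod_cast hn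
    have hs'pos : (0:ℝ) < (n : ℝ) + r - 1 := by linarith
    have hs'ne : (n : ℝ) + r - 1 ≠ 0 := hs'pos.ne'
    set x := q n - qs with hxdef
    set v := q n - q (n - 1) with hvdef
    set p : EuclideanSpace ℝ (Fin d) := ((n : ℝ) - 1) • v + (r - 1) • x with hpdef
    have hrec := hq n hn
    have hx' : ((n : ℝ) + 1 + r - 2) • (q (n + 1) - qs)
        = (n : ℝ) • x + p - (t * ((n : ℝ) + (r - 2) / 2)) • T x := by
      rw [hrec, hpdef, hxdef, hvdef]
      match_scalars <;> field_simp <;> ring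
    have hp' : ((n : ℝ) + 1 - 1) • (q (n + 1) - q n) + (r - 1) • (q (n + 1) - qs)
        = p - (t * ((n : ℝ) + (r - 2) / 2)) • T x := by
      rw [hrec, hpdef, hxdef, hvdef]
      match_scalars <;> field_simp <;> ring
    have hVn1 := hVform2 (n + 1) (by omega)
    simp only [Nat.add_sub_cancel] at hVn1
    push_cast at hVn1
    rw [hx', hp'] at hVn1
    rw [hVn1, hb17_expand T hsym t (t * ((n : ℝ) + (r - 2) / 2)) (n : ℝ) x p, hVform n hn]
    rw [← hxdef, ← hvdef, ← hpdef]
    clear_value x v p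
    have key1 : 0 ≤ ((r - 2) * ((n : ℝ) + (r - 2) / 2)) * (2 * t * ⟪x, T x⟫ - t ^ 2 * ⟪T x, T x⟫) :=
      mul_nonneg (by nlinarith) (by linarith [htb x])
    have key2 : 0 ≤ t * ((n : ℝ) + (r - 2) / 2) * (r - 2) * ⟪x, T x⟫ :=
      mul_nonneg (mul_nonneg (mul_nonneg ht0.le (by linarith)) (by linarith)) (hpsd x)
    linarith [key1, key2]
  -- monotone
  have hmono : ∀ n : ℕ, 1 ≤ n → V n ≤ V 1 := by
    intro n hn
    induction n, hn using Nat.le_induction with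
    | base => exact le_refl _
    | succ m hm ih => exact (hdec m hm).trans ih
  -- lower bound
  have hlow : ∀ n : ℕ, 1 ≤ n →
      t * ((n : ℝ) + r - 2) ^ 2 * ⟪q n - qs, T (q n - qs)⟫ / 2 ≤ V n := by
    intro n hn
    rw [hVform n hn]
    set x := q n - qs with hxdef
    set p : EuclideanSpace ℝ (Fin d) :=
      ((n : ℝ) - 1) • (q n - q (n - 1)) + (r - 1) • x with hpdef
    have hnn : (0:ℝ) ≤ ⟪p - (t * ((n : ℝ) + r - 2) / 2) • T x,
        p - (t * ((n : ℝ) + r - 2) / 2) • T x⟫ := real_inner_self_nonneg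
    rw [hb17_expand2 T (t * ((n : ℝ) + r - 2) / 2) x p] at hnn
    have key : 0 ≤ ((n : ℝ) + r - 2) ^ 2 * (2 * t * ⟪x, T x⟫ - t ^ 2 * ⟪T x, T x⟫) :=
      mul_nonneg (sq_nonneg _) (by linarith [htb x])
    linarith [hnn, key]
  -- conclude
  intro k hk
  have hk1 : (1 : ℝ) ≤ (k : ℝ) := by exact_mod_cast hk
  have hs : (0 : ℝ) < (k : ℝ) + r - 2 := by linarith
  have h1 : t * ((k : ℝ) + r - 2) ^ 2 * ⟪q k - qs, T (q k - qs)⟫ / 2 ≤ V 1 :=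
    (hlow k hk).trans (hmono k hk)
  have hfx : f (q k) - fstar = ⟪q k - qs, T (q k - qs)⟫ / 2 := by
    rw [hf]; ring
  rw [hfx]
  have heq : lam * V 1 / (2 * ((k : ℝ) + r - 2) ^ 2) = V 1 / (t * ((k : ℝ) + r - 2) ^ 2) := by
    rw [ht]
    field_simp
  rw [heq, le_div_iff₀ (by positivity)]
  linarith [h1]
end
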